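/- arXiv:1802.04475 — 7 statements merged into one kernel-verified Lean document; each statement's English description precedes it below -/
import Mathlib

section
/- For the exponential-walk Metropolis–Hastings kernel, if i = v_0, v_1, …, v_m = j is a walk in G (i.e., w_{v_l v_{l+1}} = 1 for all 0 ≤ l < m) with m ≥ 1, then the m-step transition probability satisfies (P^m)_{ij} ≥ (δ_f^{m−1}/(d_max Δ_f)^m) · p_f(j). -/
/-!
Every step `a → b` of the walk is an edge, and the Metropolis–Hastings probability of that
step is at least `p_f(b) / (d_max Δ_f)`: either the proposal is accepted with probability one
and `1 / d_a ≥ p_f(b) / (d_max Δ_f)`, or the acceptance ratio `p_f(b) d_a / (p_f(a) d_b)` is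
used and `p_f(a) d_b ≤ Δ_f d_max`. Since `P` is entrywise nonnegative, `(P ^ m) i j` dominates
the product of the step probabilities along the walk, and all but the last factor `p_f(j)`
are bounded below by `δ_f`.
-/

open Finset

namespace Matrix

theorem prod_walk_le_pow_apply {ι α : Type*} [Fintype ι] [DecidableEq ι] [CommSemiring α]
    [PartialOrder α] [IsOrderedRing α] {A : Matrix ι ι α} (hA : ∀ a b, 0 ≤ A a b) :
    ∀ (k : ℕ) (u : Fin (k + 1) → ι),
      ∏ l : Fin k, A (u l.castSucc) (u l.succ) ≤ (A ^ k) (u 0) (u (Fin.last k))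
  | 0, u => by simp
  | k + 1, u => by
    have htail := prod_walk_le_pow_apply hA k (fun t => u t.succ)
    simp only [Fin.succ_castSucc, Fin.succ_last, Fin.succ_zero_eq_one] at htail
    calc ∏ l : Fin (k + 1), A (u l.castSucc) (u l.succ)
        = A (u 0) (u 1) * ∏ l : Fin k, A (u l.succ.castSucc) (u l.succ.succ) := by
          rw [Fin.prod_univ_succ]; rfl
      _ ≤ A (u 0) (u 1) * (A ^ k) (u 1) (u (Fin.last (k + 1))) :=
          mul_le_mul_of_nonneg_left htail (hA _ _)
      _ ≤ ∑ c, A (u 0) c * (A ^ k) c (u (Fin.last (k + 1))) :=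
          single_le_sum (f := fun c => A (u 0) c * (A ^ k) c (u (Fin.last (k + 1))))
            (fun c _ => mul_nonneg (hA _ _) (pow_apply_nonneg hA k _ _)) (mem_univ _)
      _ = (A ^ (k + 1)) (u 0) (u (Fin.last (k + 1))) := by rw [pow_succ', mul_apply]

end Matrix

theorem pow_mul_le_prod_succ {ι R : Type*} [CommSemiring R] [PartialOrder R] [IsOrderedRing R]
    {g : ι → R} {δ : R} (hδ : 0 ≤ δ) (hg : ∀ a, δ ≤ g a)
    {k : ℕ} (u : Fin (k + 2) → ι) :
    δ ^ k * g (u (Fin.last (k + 1))) ≤ ∏ l : Fin (k + 1), g (u l.succ) := by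
  rw [Fin.prod_univ_castSucc, Fin.succ_last]
  gcongr
  · exact hδ.trans (hg _)
  · calc δ ^ k = ∏ _l : Fin k, δ := by simp
      _ ≤ ∏ l : Fin k, g (u l.castSucc.succ) :=
        prod_le_prod (fun _ _ => hδ) (fun _ _ => hg _)

section Gibbs

variable {ι : Type*} [Fintype ι] {f pf : ι → ℝ} {γ : ℝ}

theorem gibbs_pos (hpf : ∀ a, pf a = Real.exp (γ * f a) / ∑ l, Real.exp (γ * f l)) (a : ι) :
    0 < pf a := by
  rw [hpf]
  exact div_pos (Real.exp_pos _) (sum_pos (fun l _ => Real.exp_pos _) ⟨a, mem_univ a⟩)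

theorem exp_mul_sub_eq_div_of_gibbs
    (hpf : ∀ a, pf a = Real.exp (γ * f a) / ∑ l, Real.exp (γ * f l)) (a b : ι) :
    Real.exp (γ * (f b - f a)) = pf b / pf a := by
  have hZ : (∑ l, Real.exp (γ * f l)) ≠ 0 :=
    (sum_pos (fun l _ => Real.exp_pos _) ⟨a, mem_univ a⟩).ne'
  rw [mul_sub, Real.exp_sub, hpf, hpf, div_div_div_cancel_right₀ hZ]

end Gibbs

theorem div_mul_le_inv_mul_min_one {da db pa pb D Δ : ℝ} (hda : 0 < da) (hdb : 0 < db)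
    (hpa : 0 < pa) (hpb : 0 ≤ pb) (hdaD : da ≤ D) (hdbD : db ≤ D) (hpaΔ : pa ≤ Δ)
    (hpbΔ : pb ≤ Δ) :
    pb / (D * Δ) ≤ 1 / da * min 1 (pb / pa * da / db) := by
  have hΔ : 0 < Δ := hpa.trans_le hpaΔ
  rw [mul_min_of_nonneg _ _ (by positivity), mul_one]
  refine le_min ?_ ?_
  · calc pb / (D * Δ) ≤ Δ / (da * Δ) := by gcongr
      _ = 1 / da := by field_simp
  · calc pb / (D * Δ) ≤ pb / (pa * db) := by
          gcongr pb / ?_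
          calc pa * db ≤ Δ * D := by gcongr
            _ = D * Δ := mul_comm _ _
      _ = 1 / da * (pb / pa * da / db) := by field_simp

section MetropolisHastings

variable {n : ℕ} {W P : Matrix (Fin n) (Fin n) ℝ} {deg f pf : Fin n → ℝ} {γ : ℝ}

theorem mh_sum_erase_le_one (hW01 : ∀ i j, W i j = 0 ∨ W i j = 1) (hWdiag : ∀ i, W i i = 0)
    (hdeg : ∀ i, deg i = ∑ j, W i j) (hdegpos : ∀ i, 0 < deg i)
    (hP : ∀ i j, j ≠ i →
      P i j = (W i j / deg i) * min 1 (Real.exp (γ * (f j - f i)) * deg i / deg j))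
    (a : Fin n) :
    ∑ b ∈ univ.erase a, P a b ≤ 1 := by
  have hWnn : ∀ b, 0 ≤ W a b := fun b => by rcases hW01 a b with h | h <;> simp [h]
  calc ∑ b ∈ univ.erase a, P a b ≤ ∑ b ∈ univ.erase a, W a b / deg a := by
        refine sum_le_sum fun b hb => ?_
        rw [hP a b (ne_of_mem_erase hb)]
        exact mul_le_of_le_one_right (div_nonneg (hWnn b) (hdegpos a).le) (min_le_left _ _)
    _ = (∑ b, W a b) / deg a := by rw [← sum_div, sum_erase _ (hWdiag a)]
    _ = 1 := by rw [← hdeg, div_self (hdegpos a).ne']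

theorem mh_apply_nonneg (hW01 : ∀ i j, W i j = 0 ∨ W i j = 1) (hWdiag : ∀ i, W i i = 0)
    (hdeg : ∀ i, deg i = ∑ j, W i j) (hdegpos : ∀ i, 0 < deg i)
    (hP : ∀ i j, j ≠ i →
      P i j = (W i j / deg i) * min 1 (Real.exp (γ * (f j - f i)) * deg i / deg j))
    (hPdiag : ∀ i, P i i = 1 - ∑ j ∈ univ.erase i, P i j) (a b : Fin n) :
    0 ≤ P a b := by
  by_cases hba : b = a
  · rw [hba, hPdiag, sub_nonneg]
    exact mh_sum_erase_le_one hW01 hWdiag hdeg hdegpos hP a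
  · have hWnn : 0 ≤ W a b := by rcases hW01 a b with h | h <;> simp [h]
    have hdb := hdegpos b
    have hda := hdegpos a
    rw [hP a b hba]
    exact mul_nonneg (by positivity) (le_min zero_le_one (by positivity))

theorem mh_apply_ge_of_adj (hWdiag : ∀ i, W i i = 0) (hdegpos : ∀ i, 0 < deg i)
    {dmax : ℝ} (hdmax : IsGreatest (Set.range deg) dmax)
    (hpf : ∀ i, pf i = Real.exp (γ * f i) / ∑ l, Real.exp (γ * f l))
    {Δf : ℝ} (hΔf : IsGreatest (Set.range pf) Δf)
    (hP : ∀ i j, j ≠ i →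
      P i j = (W i j / deg i) * min 1 (Real.exp (γ * (f j - f i)) * deg i / deg j))
    {a b : Fin n} (hab : W a b = 1) :
    pf b / (dmax * Δf) ≤ P a b := by
  have hba : b ≠ a := by
    rintro rfl
    simp [hWdiag] at hab
  rw [hP a b hba, hab, exp_mul_sub_eq_div_of_gibbs hpf a b]
  exact div_mul_le_inv_mul_min_one (hdegpos a) (hdegpos b) (gibbs_pos hpf a) (gibbs_pos hpf b).le
    (hdmax.2 ⟨a, rfl⟩) (hdmax.2 ⟨b, rfl⟩) (hΔf.2 ⟨a, rfl⟩) (hΔf.2 ⟨b, rfl⟩)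

end MetropolisHastings

theorem exp_walk_multi_step_dominance_general
    {n : ℕ}
    (W : Matrix (Fin n) (Fin n) ℝ)
    (hW01 : ∀ i j, W i j = 0 ∨ W i j = 1)
    (hWdiag : ∀ i, W i i = 0)
    (deg : Fin n → ℝ) (hdeg : ∀ i, deg i = ∑ j, W i j)
    (hdegpos : ∀ i, 0 < deg i)
    (dmax : ℝ) (hdmax : IsGreatest (Set.range deg) dmax)
    (f : Fin n → ℝ) (γ : ℝ)
    (pf : Fin n → ℝ)
    (hpf : ∀ i, pf i = Real.exp (γ * f i) / ∑ l, Real.exp (γ * f l))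
    (δf Δf : ℝ) (hδf : IsLeast (Set.range pf) δf) (hΔf : IsGreatest (Set.range pf) Δf)
    (P : Matrix (Fin n) (Fin n) ℝ)
    (hP : ∀ i j, j ≠ i →
      P i j = (W i j / deg i) * min 1 (Real.exp (γ * (f j - f i)) * deg i / deg j))
    (hPdiag : ∀ i, P i i = 1 - ∑ j ∈ Finset.univ.erase i, P i j)
    (i j : Fin n) (m : ℕ) (hm : 1 ≤ m)
    (v : Fin (m + 1) → Fin n) (hv0 : v 0 = i) (hvm : v (Fin.last m) = j)
    (hwalk : ∀ l : Fin m, W (v l.castSucc) (v l.succ) = 1) :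
    δf ^ (m - 1) / (dmax * Δf) ^ m * pf j ≤ (P ^ m) i j := by
  obtain ⟨k, rfl⟩ : ∃ k, m = k + 1 := ⟨m - 1, by omega⟩
  have hpfpos := gibbs_pos hpf
  have hδ : 0 ≤ δf := by obtain ⟨a, rfl⟩ := hδf.1; exact (hpfpos a).le
  have hDΔ : 0 < dmax * Δf :=
    mul_pos ((hdegpos i).trans_le (hdmax.2 ⟨i, rfl⟩)) ((hpfpos i).trans_le (hΔf.2 ⟨i, rfl⟩))
  have hPnn := mh_apply_nonneg hW01 hWdiag hdeg hdegpos hP hPdiag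
  calc δf ^ (k + 1 - 1) / (dmax * Δf) ^ (k + 1) * pf j
      = δf ^ k * pf (v (Fin.last (k + 1))) / (dmax * Δf) ^ (k + 1) := by
        rw [hvm, Nat.add_sub_cancel]; ring
    _ ≤ (∏ l : Fin (k + 1), pf (v l.succ)) / (dmax * Δf) ^ (k + 1) := by
        gcongr; exact pow_mul_le_prod_succ hδ (fun a => hδf.2 ⟨a, rfl⟩) v
    _ = ∏ l : Fin (k + 1), pf (v l.succ) / (dmax * Δf) := by
        rw [prod_div_distrib, prod_const, card_univ, Fintype.card_fin]
    _ ≤ ∏ l : Fin (k + 1), P (v l.castSucc) (v l.succ) :=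
        prod_le_prod (fun l _ => div_nonneg (hpfpos _).le hDΔ.le)
          (fun l _ => mh_apply_ge_of_adj hWdiag hdegpos hdmax hpf hΔf hP (hwalk l))
    _ ≤ (P ^ (k + 1)) i j := hv0 ▸ hvm ▸ Matrix.prod_walk_le_pow_apply hPnn (k + 1) v

/-- For the exponential-walk Metropolis–Hastings kernel, if
`i = v 0, v 1, …, v m = j` is a walk in `G` with `m ≥ 1`, then the `m`-step transition
probability satisfies `(P ^ m) i j ≥ (δ_f ^ (m − 1) / (d_max * Δ_f) ^ m) * p_f j`. -/
theorem exp_walk_multi_step_dominance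
    {n : ℕ} (hn : 2 ≤ n)
    (W : Matrix (Fin n) (Fin n) ℝ)
    (hWsymm : ∀ i j, W i j = W j i)
    (hW01 : ∀ i j, W i j = 0 ∨ W i j = 1)
    (hWdiag : ∀ i, W i i = 0)
    (hWconn : ∀ i j : Fin n, ∃ m : ℕ, ∃ v : Fin (m + 1) → Fin n,
      v 0 = i ∧ v (Fin.last m) = j ∧ ∀ l : Fin m, W (v l.castSucc) (v l.succ) = 1)
    (deg : Fin n → ℝ) (hdeg : ∀ i, deg i = ∑ j, W i j)
    (hdegpos : ∀ i, 0 < deg i)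
    (dmax : ℝ) (hdmax : IsGreatest (Set.range deg) dmax)
    (f : Fin n → ℝ) (γ : ℝ) (hγ : 0 ≤ γ)
    (pf : Fin n → ℝ)
    (hpf : ∀ i, pf i = Real.exp (γ * f i) / ∑ l, Real.exp (γ * f l))
    (δf Δf : ℝ) (hδf : IsLeast (Set.range pf) δf) (hΔf : IsGreatest (Set.range pf) Δf)
    (P : Matrix (Fin n) (Fin n) ℝ)
    (hP : ∀ i j, j ≠ i →
      P i j = (W i j / deg i) * min 1 (Real.exp (γ * (f j - f i)) * deg i / deg j))
    (hPdiag : ∀ i, P i i = 1 - ∑ j ∈ Finset.univ.erase i, P i j)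
    (i j : Fin n) (m : ℕ) (hm : 1 ≤ m)
    (v : Fin (m + 1) → Fin n) (hv0 : v 0 = i) (hvm : v (Fin.last m) = j)
    (hwalk : ∀ l : Fin m, W (v l.castSucc) (v l.succ) = 1) :
    δf ^ (m - 1) / (dmax * Δf) ^ m * pf j ≤ (P ^ m) i j :=
  exp_walk_multi_step_dominance_general W hW01 hWdiag deg hdeg hdegpos dmax hdmax f γ pf hpf δf Δf
    hδf hΔf P hP hPdiag i j m hm v hv0 hvm hwalk
end

section
/- Let P and B be row-stochastic n×n matrices, p_f a probability vector on V = {1,…,n} that is stationary for P (i.e., p_fᵀ P = p_fᵀ), P_f the n×n matrix all of whose rows equal p_f, and θ ∈ [0,1]. If P^r = (1−θ) P_f + θ B for some integer r ≥ 1, then for every integer s ≥ 1, P^{rs} = (1−θ^s) P_f + θ^s B^s, and moreover for every integer m ≥ 0, P^{rs+m} − P_f = θ^s (B^s P^m − P_f). -/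
/-!
Write `Q = P ^ r` and let `E` be the matrix with all rows `p_f`. Stationarity gives `E * P = E`,
hence `E * Q = E`, and unit row sums of `B` give `B * E = E`, hence `B ^ s * E = E`. In any algebra
these two absorption laws alone let `Q = (1 - θ) • E + θ • B` be raised to the `s`-th power term by
term, and multiplying the result on the right by `P ^ m` only changes `B ^ s` into `B ^ s * P ^ m`.
-/

section Absorption

variable {M : Type*} [Monoid M] {a b : M}

theorem mul_pow_eq_self_of_mul_eq_self (h : a * b = a) (m : ℕ) : a * b ^ m = a := by
  induction m with
  | zero => rw [pow_zero, mul_one]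
  | succ m ih => rw [pow_succ, ← mul_assoc, ih, h]

theorem pow_mul_eq_self_of_mul_eq_self (h : b * a = a) (m : ℕ) : b ^ m * a = a := by
  induction m with
  | zero => rw [pow_zero, one_mul]
  | succ m ih => rw [pow_succ, mul_assoc, h, ih]

end Absorption

section ConvexCombination

variable {R A : Type*} [CommRing R] [Ring A] [Algebra R A] {Q E B : A} {θ : R}

theorem pow_eq_sub_pow_smul_add_pow_smul_pow (hQ : Q = (1 - θ) • E + θ • B) (hEQ : E * Q = E)
    (hBE : B * E = E) (s : ℕ) : Q ^ s = (1 - θ ^ s) • E + θ ^ s • B ^ s := by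
  induction s with
  | zero => simp
  | succ s ih =>
    have hBsE : B ^ s * E = E := pow_mul_eq_self_of_mul_eq_self hBE s
    calc Q ^ (s + 1) = (1 - θ ^ s) • (E * Q) + θ ^ s • (B ^ s * Q) := by
          rw [pow_succ, ih, add_mul, smul_mul_assoc, smul_mul_assoc]
      _ = (1 - θ ^ s) • E + θ ^ s • ((1 - θ) • E + θ • B ^ (s + 1)) := by
          rw [hEQ, hQ, mul_add, mul_smul_comm, mul_smul_comm, hBsE, pow_succ]
      _ = (1 - θ ^ (s + 1)) • E + θ ^ (s + 1) • B ^ (s + 1) := by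
          simp only [smul_add, smul_smul, pow_succ]
          module

theorem mul_sub_eq_smul_of_eq_sub_smul_add_smul {Y C X : A} {t : R}
    (hY : Y = (1 - t) • E + t • C) (hEX : E * X = E) : Y * X - E = t • (C * X - E) := by
  rw [hY, add_mul, smul_mul_assoc, smul_mul_assoc, hEX]
  module

end ConvexCombination

namespace Matrix

variable {R : Type*} [CommSemiring R] {l m n : Type*} [Fintype m]

theorem mul_eq_of_sum_row_eq_one {M : Matrix l m R} {E : Matrix m n R} {E' : Matrix l n R}
    {v : n → R} (hM : ∀ i, ∑ j, M i j = 1) (hE : ∀ i j, E i j = v j) (hE' : ∀ i j, E' i j = v j) :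
    M * E = E' := by
  ext i j
  simp only [mul_apply, hE, hE', ← Finset.sum_mul, hM, one_mul]

theorem mul_eq_self_of_vecMul_eq_self {E : Matrix l m R} {P : Matrix m m R} {v : m → R}
    (hE : ∀ i j, E i j = v j) (hv : v ᵥ* P = v) : E * P = E := by
  ext i j
  simpa only [mul_apply, hE, vecMul, dotProduct] using congrFun hv j

end Matrix

theorem matrix_power_decomposition_general
    {n : ℕ}
    (P B : Matrix (Fin n) (Fin n) ℝ)
    (hBrow : ∀ i, ∑ j, B i j = 1)
    (pf : Fin n → ℝ)
    (hstat : ∀ j, ∑ i, pf i * P i j = pf j)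
    (Pf : Matrix (Fin n) (Fin n) ℝ) (hPf : ∀ i j, Pf i j = pf j)
    (θ : ℝ)
    (r : ℕ)
    (hdecomp : P ^ r = (1 - θ) • Pf + θ • B) :
    (∀ s : ℕ, 1 ≤ s → P ^ (r * s) = (1 - θ ^ s) • Pf + θ ^ s • B ^ s) ∧
    (∀ s m : ℕ, 1 ≤ s → P ^ (r * s + m) - Pf = θ ^ s • (B ^ s * P ^ m - Pf)) := by
  have hPfP : Pf * P = Pf := Matrix.mul_eq_self_of_vecMul_eq_self hPf (funext hstat)
  have hBPf : B * Pf = Pf := Matrix.mul_eq_of_sum_row_eq_one hBrow hPf hPf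
  have hpow (s : ℕ) : P ^ (r * s) = (1 - θ ^ s) • Pf + θ ^ s • B ^ s := by
    rw [pow_mul]
    exact pow_eq_sub_pow_smul_add_pow_smul_pow hdecomp
      (mul_pow_eq_self_of_mul_eq_self hPfP r) hBPf s
  refine ⟨fun s _ => hpow s, fun s m _ => ?_⟩
  rw [pow_add]
  exact mul_sub_eq_smul_of_eq_sub_smul_add_smul (hpow s) (mul_pow_eq_self_of_mul_eq_self hPfP m)

/-- Let `P` and `B` be row-stochastic `n×n` matrices, `p_f` a probability
vector on `V = {1,…,n}` that is stationary for `P`, `P_f` the matrix all of whose rows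
equal `p_f`, and `θ ∈ [0,1]`.  If `P^r = (1−θ) P_f + θ B` for some `r ≥ 1`, then for
every integer `s ≥ 1`, `P^{rs} = (1−θ^s) P_f + θ^s B^s`, and moreover for every integer
`m ≥ 0`, `P^{rs+m} − P_f = θ^s (B^s P^m − P_f)`. -/
theorem matrix_power_decomposition
    {n : ℕ}
    (P B : Matrix (Fin n) (Fin n) ℝ)
    (hPnn : ∀ i j, 0 ≤ P i j) (hProw : ∀ i, ∑ j, P i j = 1)
    (hBnn : ∀ i j, 0 ≤ B i j) (hBrow : ∀ i, ∑ j, B i j = 1)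
    (pf : Fin n → ℝ) (hpfnn : ∀ i, 0 ≤ pf i) (hpfsum : ∑ i, pf i = 1)
    (hstat : ∀ j, ∑ i, pf i * P i j = pf j)
    (Pf : Matrix (Fin n) (Fin n) ℝ) (hPf : ∀ i j, Pf i j = pf j)
    (θ : ℝ) (hθ : θ ∈ Set.Icc (0 : ℝ) 1)
    (r : ℕ) (hr : 1 ≤ r)
    (hdecomp : P ^ r = (1 - θ) • Pf + θ • B) :
    (∀ s : ℕ, 1 ≤ s → P ^ (r * s) = (1 - θ ^ s) • Pf + θ ^ s • B ^ s) ∧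
    (∀ s m : ℕ, 1 ≤ s → P ^ (r * s + m) - Pf = θ ^ s • (B ^ s * P ^ m - Pf)) :=
  matrix_power_decomposition_general P B hBrow pf hstat Pf hPf θ r hdecomp
end

section
/- (Dominance for k-smooth graph functions.) If f is k-smooth and nonzero at every vertex, then for all vertices i, j with w_ij = 1, the Laplacian-walk proposal satisfies Q'_{ij} ≥ (1/k) p_f(j). -/
/-- The local cumulative coherence of order `k` at node `i`: the Euclidean norm
`‖U_kᵀ δ_i‖₂`, where `δ_i` is the `i`-th standard basis vector of `ℝ^n`. -/
noncomputable def localCoherence {n k : ℕ} (Uk : Matrix (Fin n) (Fin k) ℝ)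
    (i : Fin n) : ℝ :=
  Real.sqrt (∑ l, (Uk.transpose.mulVec (Pi.single i 1) l) ^ 2)

/-!
With `c l = ∑ m, U l m ^ 2` the squared row norms of `U = U_k`, the proposal is
`Q'_{ij} = c j / D` with `D = ∑ l, W i l * c l`. Cauchy–Schwarz together with `‖U α‖ = ‖α‖`
gives `p_f(j) ≤ c j`; `w_ij = 1` gives `c j ≤ D`; and since `W` is a 0/1 matrix,
`D ≤ ∑ l, c l = tr (Uᵀ U) = k`.
-/

open Matrix

section RowNorms

variable {ι κ : Type*} [Fintype ι] [Fintype κ] [DecidableEq κ] {U : Matrix ι κ ℝ}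

theorem sum_sum_sq_eq_card_of_transpose_mul_self_eq_one (hU : Uᵀ * U = 1) :
    ∑ l, ∑ m, U l m ^ 2 = Fintype.card κ := by
  have hcol : ∀ m, ∑ l, U l m ^ 2 = 1 := fun m => by
    simpa [mul_apply, sq] using congrFun (congrFun hU m) m
  rw [Finset.sum_comm]
  simp [hcol]

theorem sum_sq_mulVec_of_transpose_mul_self_eq_one (hU : Uᵀ * U = 1) (α : κ → ℝ) :
    ∑ l, (U *ᵥ α) l ^ 2 = ∑ m, α m ^ 2 := by
  have h : (U *ᵥ α) ⬝ᵥ (U *ᵥ α) = α ⬝ᵥ α := by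
    rw [dotProduct_mulVec, vecMul_mulVec, hU, vecMul_one]
  simpa [dotProduct, sq] using h

theorem mulVec_apply_sq_div_sum_sq_le (hU : Uᵀ * U = 1) (α : κ → ℝ) (j : ι) :
    (U *ᵥ α) j ^ 2 / ∑ l, (U *ᵥ α) l ^ 2 ≤ ∑ m, U j m ^ 2 := by
  rw [sum_sq_mulVec_of_transpose_mul_self_eq_one hU]
  exact div_le_of_le_mul₀ (by positivity) (by positivity)
    (Finset.sum_mul_sq_le_sq_mul_sq Finset.univ (U j) α)

end RowNorms

theorem localCoherence_sq {n k : ℕ} (Uk : Matrix (Fin n) (Fin k) ℝ) (i : Fin n) :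
    localCoherence Uk i ^ 2 = ∑ m, Uk i m ^ 2 := by
  rw [localCoherence, Real.sq_sqrt (by positivity)]
  simp [mulVec, dotProduct, Pi.single_apply]

section ZeroOneWeights

variable {ι : Type*} [Fintype ι] {w c : ι → ℝ}

theorem le_sum_mul_of_eq_one (hw : ∀ l, w l = 0 ∨ w l = 1) (hc : ∀ l, 0 ≤ c l) {j : ι}
    (hj : w j = 1) : c j ≤ ∑ l, w l * c l := by
  calc c j = w j * c j := by rw [hj, one_mul]
    _ ≤ ∑ l, w l * c l :=
      Finset.single_le_sum (f := fun l => w l * c l)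
        (fun l _ => by rcases hw l with h | h <;> simp [h, hc l]) (Finset.mem_univ j)

theorem sum_mul_le_sum_of_eq_zero_or_eq_one (hw : ∀ l, w l = 0 ∨ w l = 1)
    (hc : ∀ l, 0 ≤ c l) :
    ∑ l, w l * c l ≤ ∑ l, c l :=
  Finset.sum_le_sum fun l _ => by rcases hw l with h | h <;> simp [h, hc l]

end ZeroOneWeights

theorem one_div_mul_le_div_of_le {p a D K : ℝ} (hp : 0 ≤ p) (hpa : p ≤ a) (haD : a ≤ D)
    (hDK : D ≤ K) : 1 / K * p ≤ a / D := by
  rcases (hp.trans hpa).eq_or_lt with ha | ha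
  · simp [← ha, le_antisymm hpa (ha ▸ hp)]
  · have hD : 0 < D := ha.trans_le haD
    calc 1 / K * p ≤ a / K := by
          rw [one_div_mul_eq_div]
          exact div_le_div_of_nonneg_right hpa (hD.le.trans hDK)
      _ ≤ a / D := div_le_div_of_nonneg_left ha.le hD hDK

theorem laplacian_walk_dominance_ksmooth_general
    {n : ℕ}
    (W : Matrix (Fin n) (Fin n) ℝ)
    (hW01 : ∀ i j, W i j = 0 ∨ W i j = 1)
    {k : ℕ}
    (Uk : Matrix (Fin n) (Fin k) ℝ)
    (hU : Uk.transpose * Uk = 1)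
    (f : Fin n → ℝ) (α : Fin k → ℝ) (hf : f = Uk.mulVec α)
    (pf : Fin n → ℝ) (hpf : ∀ i, pf i = f i ^ 2 / ∑ j, f j ^ 2)
    (Q' : Matrix (Fin n) (Fin n) ℝ)
    (hQ' : ∀ i j, Q' i j =
      W i j * (localCoherence Uk j) ^ 2 / ∑ l, W i l * (localCoherence Uk l) ^ 2)
    (i j : Fin n) (hij : W i j = 1) :
    (1 / (k : ℝ)) * pf j ≤ Q' i j := by
  set c : Fin n → ℝ := fun l => ∑ m, Uk l m ^ 2
  have hc : ∀ l, 0 ≤ c l := fun l => by positivity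
  have hQ : Q' i j = c j / ∑ l, W i l * c l := by
    simp only [hQ', hij, one_mul, localCoherence_sq, c]
  have hpf_le : pf j ≤ c j := by
    rw [hpf j, hf]
    exact mulVec_apply_sq_div_sum_sq_le hU α j
  have hpf_nonneg : 0 ≤ pf j := by
    rw [hpf j]
    positivity
  have hD_le : ∑ l, W i l * c l ≤ k := by
    refine (sum_mul_le_sum_of_eq_zero_or_eq_one (hW01 i) hc).trans_eq ?_
    rw [sum_sum_sq_eq_card_of_transpose_mul_self_eq_one hU, Fintype.card_fin]
  rw [hQ]
  exact one_div_mul_le_div_of_le hpf_nonneg hpf_le (le_sum_mul_of_eq_one (hW01 i) hc hij) hD_le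

/-- Dominance for `k`-smooth graph functions: if `f` is `k`-smooth and
nonzero at every vertex, then for all vertices `i, j` with `w i j = 1`, the
Laplacian-walk proposal `Q'_{ij} = w_ij ‖U_kᵀ δ_j‖₂² / Σ_{l : w_il = 1} ‖U_kᵀ δ_l‖₂²`
satisfies `Q'_{ij} ≥ (1/k) p_f(j)`.  (Since `W` is a 0/1 matrix, the sum over
`{l : w_il = 1}` is encoded as `∑ l, W i l * ‖U_kᵀ δ_l‖₂²`.) -/
theorem laplacian_walk_dominance_ksmooth
    {n : ℕ} (hn : 2 ≤ n)
    (W : Matrix (Fin n) (Fin n) ℝ)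
    (hWsymm : ∀ i j, W i j = W j i)
    (hW01 : ∀ i j, W i j = 0 ∨ W i j = 1)
    (hWdiag : ∀ i, W i i = 0)
    (hWconn : ∀ i j : Fin n, ∃ m : ℕ, ∃ v : Fin (m + 1) → Fin n,
      v 0 = i ∧ v (Fin.last m) = j ∧ ∀ l : Fin m, W (v l.castSucc) (v l.succ) = 1)
    (hdegpos : ∀ i, 0 < ∑ j, W i j)
    {k : ℕ} (hk1 : 1 ≤ k) (hkn : k ≤ n)
    (Uk : Matrix (Fin n) (Fin k) ℝ)
    (hU : Uk.transpose * Uk = 1)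
    (f : Fin n → ℝ) (α : Fin k → ℝ) (hf : f = Uk.mulVec α) (hfne : ∀ i, f i ≠ 0)
    (pf : Fin n → ℝ) (hpf : ∀ i, pf i = f i ^ 2 / ∑ j, f j ^ 2)
    (Q' : Matrix (Fin n) (Fin n) ℝ)
    (hQ' : ∀ i j, Q' i j =
      W i j * (localCoherence Uk j) ^ 2 / ∑ l, W i l * (localCoherence Uk l) ^ 2)
    (i j : Fin n) (hij : W i j = 1) :
    (1 / (k : ℝ)) * pf j ≤ Q' i j :=
  laplacian_walk_dominance_ksmooth_general W hW01 Uk hU f α hf pf hpf Q' hQ' i j hij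
end

section
/- If f is ε-approximately k-smooth and f ≠ 0, then for every vertex i, p_f(i) = f_i²/‖f‖₂² ≤ (‖U_kᵀ δ_i‖₂ + ε)². -/
/-!
`U_k U_kᵀ` is the orthogonal projection onto the span of the columns of `U_k`, so
`‖f_ks‖₂ ≤ ‖f‖₂`, and by Cauchy–Schwarz `|f_ks(i)| = |⟨U_kᵀ δ_i, U_kᵀ f⟩| ≤ ‖U_kᵀ δ_i‖₂ ‖f_ks‖₂`.
Adding the residual bound `|f_r(i)| ≤ ε ‖f_ks‖₂` gives
`|f_i| ≤ (‖U_kᵀ δ_i‖₂ + ε) ‖f_ks‖₂ ≤ (‖U_kᵀ δ_i‖₂ + ε) ‖f‖₂`.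
-/

open Matrix

section ColumnOrthonormal

variable {m l : Type*} [Fintype m] [Fintype l] [DecidableEq l]
  {U : Matrix m l ℝ}

lemma sum_sq_eq_dotProduct_self {ι : Type*} [Fintype ι] (x : ι → ℝ) :
    ∑ j, x j ^ 2 = x ⬝ᵥ x := by
  simp only [dotProduct, sq]

lemma dotProduct_mulVec_self_of_transpose_mul_self (hU : Uᵀ * U = 1) (c : l → ℝ) :
    U *ᵥ c ⬝ᵥ U *ᵥ c = c ⬝ᵥ c := by
  rw [dotProduct_mulVec, ← mulVec_transpose, mulVec_mulVec, hU, one_mulVec]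

lemma sum_sq_mulVec_of_transpose_mul_self (hU : Uᵀ * U = 1) (c : l → ℝ) :
    ∑ j, (U *ᵥ c) j ^ 2 = ∑ j, c j ^ 2 := by
  simp only [sum_sq_eq_dotProduct_self, dotProduct_mulVec_self_of_transpose_mul_self hU]

lemma sum_sq_projection_le (hU : Uᵀ * U = 1) (f : m → ℝ) :
    ∑ j, (U *ᵥ (Uᵀ *ᵥ f)) j ^ 2 ≤ ∑ j, f j ^ 2 := by
  set p := U *ᵥ (Uᵀ *ᵥ f)
  have hpf : p ⬝ᵥ f = p ⬝ᵥ p := by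
    rw [dotProduct_mulVec_self_of_transpose_mul_self hU, dotProduct_comm, dotProduct_mulVec,
      ← mulVec_transpose]
  have hres : 0 ≤ (f - p) ⬝ᵥ (f - p) := by
    rw [← sum_sq_eq_dotProduct_self]
    positivity
  simp only [sub_dotProduct, dotProduct_sub, dotProduct_comm f p, hpf] at hres
  simp only [sum_sq_eq_dotProduct_self]
  linarith

end ColumnOrthonormal

lemma sq_mulVec_apply_le {m l : Type*} [Fintype l] (U : Matrix m l ℝ) (c : l → ℝ) (i : m) :
    (U *ᵥ c) i ^ 2 ≤ (∑ j, U i j ^ 2) * ∑ j, c j ^ 2 :=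
  Finset.sum_mul_sq_le_sq_mul_sq _ _ _

lemma localCoherence_eq_sqrt_sum_sq {n k : ℕ} (Uk : Matrix (Fin n) (Fin k) ℝ) (i : Fin n) :
    localCoherence Uk i = √(∑ l, Uk i l ^ 2) := by
  simp only [localCoherence, mulVec_single_one, col_apply, transpose_apply]

lemma abs_projection_apply_le {n k : ℕ} {Uk : Matrix (Fin n) (Fin k) ℝ}
    (hU : Ukᵀ * Uk = 1) (f : Fin n → ℝ) (i : Fin n) :
    |(Uk *ᵥ (Ukᵀ *ᵥ f)) i| ≤
      localCoherence Uk i * √(∑ j, (Uk *ᵥ (Ukᵀ *ᵥ f)) j ^ 2) := by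
  rw [localCoherence_eq_sqrt_sum_sq, sum_sq_mulVec_of_transpose_mul_self hU,
    ← Real.sqrt_mul (Finset.sum_nonneg fun _ _ => sq_nonneg _)]
  exact Real.abs_le_sqrt (sq_mulVec_apply_le _ _ _)

theorem approx_ksmooth_density_coherence_bound_general
    {n k : ℕ}
    (Uk : Matrix (Fin n) (Fin k) ℝ)
    (hU : Uk.transpose * Uk = 1)
    (f : Fin n → ℝ) (ε : ℝ)
    (fks : Fin n → ℝ) (hfks : fks = Uk.mulVec (Uk.transpose.mulVec f))
    (happrox : ∀ i, |f i - fks i| ≤ ε * Real.sqrt (∑ j, fks j ^ 2))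
    (i : Fin n) :
    f i ^ 2 / (∑ j, f j ^ 2) ≤ (localCoherence Uk i + ε) ^ 2 := by
  subst hfks
  set S := √(∑ j, (Uk *ᵥ (Ukᵀ *ᵥ f)) j ^ 2)
  have hf_i : |f i| ≤ (localCoherence Uk i + ε) * S := by
    linarith [abs_projection_apply_le hU f i, happrox i,
      abs_sub_abs_le_abs_sub (f i) ((Uk *ᵥ (Ukᵀ *ᵥ f)) i)]
  have hS : S ^ 2 ≤ ∑ j, f j ^ 2 := by
    rw [Real.sq_sqrt (by positivity)]
    exact sum_sq_projection_le hU f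
  refine div_le_of_le_mul₀ (by positivity) (sq_nonneg _) ?_
  calc f i ^ 2 = |f i| ^ 2 := (sq_abs _).symm
    _ ≤ ((localCoherence Uk i + ε) * S) ^ 2 := by gcongr
    _ = (localCoherence Uk i + ε) ^ 2 * S ^ 2 := mul_pow _ _ _
    _ ≤ (localCoherence Uk i + ε) ^ 2 * ∑ j, f j ^ 2 := by gcongr

/-- if `f` is `ε`-approximately `k`-smooth (i.e., writing
`f = f_ks + f_r` with `f_ks = U_k U_kᵀ f`, one has `|f_r(i)| ≤ ε ‖f_ks‖₂` for all `i`,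
where `ε > 0`) and `f ≠ 0`, then for every vertex `i`,
`p_f(i) = f_i²/‖f‖₂² ≤ (‖U_kᵀ δ_i‖₂ + ε)²`. -/
theorem approx_ksmooth_density_coherence_bound
    {n k : ℕ} (hk1 : 1 ≤ k) (hkn : k ≤ n)
    (Uk : Matrix (Fin n) (Fin k) ℝ)
    (hU : Uk.transpose * Uk = 1)
    (f : Fin n → ℝ) (ε : ℝ) (hε : 0 < ε)
    (fks : Fin n → ℝ) (hfks : fks = Uk.mulVec (Uk.transpose.mulVec f))
    (happrox : ∀ i, |f i - fks i| ≤ ε * Real.sqrt (∑ j, fks j ^ 2))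
    (hf0 : f ≠ 0)
    (i : Fin n) :
    f i ^ 2 / (∑ j, f j ^ 2) ≤ (localCoherence Uk i + ε) ^ 2 :=
  approx_ksmooth_density_coherence_bound_general Uk hU f ε fks hfks happrox i
end

section
/- (Convergence of the Laplacian walk, k-smooth case.) If f is k-smooth and nonzero at every vertex, the Laplacian-walk Metropolis–Hastings chain converges to p_f in total variation at the rate ‖P^t_{i*} − p_f‖_TV ≤ (1 − δ_f^{r−1}/k^r)^{⌊t/r⌋} for every starting vertex i ∈ V and every t ≥ 0, where δ_f = min_i p_f(i). -/
open Finset in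
private lemma pow_entry_nonneg' {n : ℕ} {P : Matrix (Fin n) (Fin n) ℝ}
    (h : ∀ i j, 0 ≤ P i j) (m : ℕ) : ∀ i j, 0 ≤ (P ^ m) i j := by
  induction m with
  | zero => intro i j; rw [pow_zero, Matrix.one_apply]; positivity
  | succ m ih =>
    intro i j
    rw [pow_succ, Matrix.mul_apply]
    exact Finset.sum_nonneg fun b _ => mul_nonneg (ih i b) (h b j)

private lemma pow_row_sum' {n : ℕ} {P : Matrix (Fin n) (Fin n) ℝ}
    (h : ∀ i, ∑ j, P i j = 1) (m : ℕ) : ∀ i, ∑ j, (P ^ m) i j = 1 := by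
  induction m with
  | zero => intro i; simp [Matrix.one_apply]
  | succ m ih =>
    intro i
    simp only [pow_succ, Matrix.mul_apply]
    rw [Finset.sum_comm]
    calc ∑ b, ∑ j, (P ^ m) i b * P b j = ∑ b, (P ^ m) i b * ∑ j, P b j := by
          simp [Finset.mul_sum]
      _ = 1 := by simp [h, ih i]

private lemma pow_ge_walk' {n : ℕ} {P : Matrix (Fin n) (Fin n) ℝ}
    (hP : ∀ i j, 0 ≤ P i j) :
    ∀ (m : ℕ) (v : Fin (m + 1) → Fin n),
      (∏ l : Fin m, P (v l.castSucc) (v l.succ)) ≤ (P ^ m) (v 0) (v (Fin.last m)) := by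
  intro m
  induction m with
  | zero => intro v; simp [Matrix.one_apply, Fin.last]
  | succ m ih =>
    intro v
    set v' : Fin (m + 1) → Fin n := fun l => v l.castSucc with hv'
    have h1 : (∏ l : Fin (m + 1), P (v l.castSucc) (v l.succ))
        = (∏ l : Fin m, P (v' l.castSucc) (v' l.succ)) * P (v' (Fin.last m)) (v (Fin.last (m+1))) := by
      rw [Fin.prod_univ_castSucc]
      congr 1
    rw [h1]
    have h2 : (∏ l : Fin m, P (v' l.castSucc) (v' l.succ)) ≤ (P ^ m) (v' 0) (v' (Fin.last m)) := ih v'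
    have h3 : (P ^ (m+1)) (v 0) (v (Fin.last (m+1)))
        = ∑ b, (P ^ m) (v 0) b * P b (v (Fin.last (m+1))) := by
      rw [pow_succ, Matrix.mul_apply]
    rw [h3]
    have h0 : v' 0 = v 0 := by simp [hv']
    calc (∏ l : Fin m, P (v' l.castSucc) (v' l.succ)) * P (v' (Fin.last m)) (v (Fin.last (m+1)))
        ≤ (P ^ m) (v 0) (v' (Fin.last m)) * P (v' (Fin.last m)) (v (Fin.last (m+1))) := by
          apply mul_le_mul_of_nonneg_right _ (hP _ _)
          rw [← h0]; exact h2
      _ ≤ ∑ b, (P ^ m) (v 0) b * P b (v (Fin.last (m+1))) := by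
          apply Finset.single_le_sum (f := fun b => (P ^ m) (v 0) b * P b (v (Fin.last (m+1))))
            (fun b _ => mul_nonneg (pow_entry_nonneg' hP m _ _) (hP _ _)) (Finset.mem_univ _)

private lemma tv_contract' {n : ℕ} (M : Matrix (Fin n) (Fin n) ℝ) (c : Fin n → ℝ)
    (hlb : ∀ i j, c j ≤ M i j) (hrow : ∀ i, ∑ j, M i j = 1)
    (ν : Fin n → ℝ) (hν : ∑ i, ν i = 0) :
    ∑ j, |∑ i, ν i * M i j| ≤ (1 - ∑ j, c j) * ∑ i, |ν i| := by
  have key : ∀ j, |∑ i, ν i * M i j| ≤ ∑ i, |ν i| * (M i j - c j) := by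
    intro j
    have h : ∑ i, ν i * M i j = ∑ i, ν i * (M i j - c j) := by
      simp only [mul_sub, Finset.sum_sub_distrib, ← Finset.sum_mul, hν, zero_mul, sub_zero]
    rw [h]
    calc |∑ i, ν i * (M i j - c j)| ≤ ∑ i, |ν i * (M i j - c j)| := Finset.abs_sum_le_sum_abs _ _
      _ = ∑ i, |ν i| * (M i j - c j) := by
          apply Finset.sum_congr rfl; intro a _
          rw [abs_mul, abs_of_nonneg (sub_nonneg.2 (hlb a j))]
  calc ∑ j, |∑ i, ν i * M i j| ≤ ∑ j, ∑ a, |ν a| * (M a j - c j) :=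
        Finset.sum_le_sum fun j _ => key j
    _ = ∑ a, |ν a| * (1 - ∑ j, c j) := by
        rw [Finset.sum_comm]
        apply Finset.sum_congr rfl; intro a _
        rw [← Finset.mul_sum, Finset.sum_sub_distrib, hrow a]
    _ = (1 - ∑ j, c j) * ∑ a, |ν a| := by
        rw [Finset.mul_sum]; apply Finset.sum_congr rfl; intros; ring

/-- Convergence of the Laplacian walk, `k`-smooth case: if `f` is
`k`-smooth and nonzero at every vertex, the Laplacian-walk Metropolis–Hastings chain
converges to `p_f` in total variation at the rate
`‖P^t_{i*} − p_f‖_TV ≤ (1 − δ_f^{r−1}/k^r)^⌊t/r⌋` for every starting vertex `i` and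
every `t ≥ 0`, where `δ_f = min_i p_f(i)`.  Here `r` is the diameter of the graph, and
(as in the paper) every pair of vertices is joined by a walk of length exactly `r`. -/
theorem laplacian_walk_tv_convergence_ksmooth
    {n : ℕ} (hn : 2 ≤ n)
    (W : Matrix (Fin n) (Fin n) ℝ)
    (hWsymm : ∀ i j, W i j = W j i)
    (hW01 : ∀ i j, W i j = 0 ∨ W i j = 1)
    (hWdiag : ∀ i, W i i = 0)
    (hdegpos : ∀ i, 0 < ∑ j, W i j)
    (r : ℕ) (hr1 : 1 ≤ r)
    (hWconn : ∀ i j : Fin n, ∃ v : Fin (r + 1) → Fin n,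
      v 0 = i ∧ v (Fin.last r) = j ∧ ∀ l : Fin r, W (v l.castSucc) (v l.succ) = 1)
    {k : ℕ} (hk1 : 1 ≤ k) (hkn : k ≤ n)
    (Uk : Matrix (Fin n) (Fin k) ℝ)
    (hU : Uk.transpose * Uk = 1)
    (f : Fin n → ℝ) (α : Fin k → ℝ) (hf : f = Uk.mulVec α) (hfne : ∀ i, f i ≠ 0)
    (pf : Fin n → ℝ) (hpf : ∀ i, pf i = f i ^ 2 / ∑ j, f j ^ 2)
    (δf : ℝ) (hδf : IsLeast (Set.range pf) δf)
    (Q' : Matrix (Fin n) (Fin n) ℝ)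
    (hQ' : ∀ i j, Q' i j =
      W i j * (localCoherence Uk j) ^ 2 / ∑ l, W i l * (localCoherence Uk l) ^ 2)
    (P : Matrix (Fin n) (Fin n) ℝ)
    (hP1 : ∀ i j, j ≠ i → W i j = 1 →
      P i j = Q' i j * min 1 ((pf j * Q' j i) / (pf i * Q' i j)))
    (hP0 : ∀ i j, j ≠ i → W i j = 0 → P i j = 0)
    (hPdiag : ∀ i, P i i = 1 - ∑ j ∈ Finset.univ.erase i, P i j)
    (i : Fin n) (t : ℕ) :
    (1 / 2) * ∑ j, |(P ^ t) i j - pf j| ≤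
      (1 - δf ^ (r - 1) / (k : ℝ) ^ r) ^ (t / r) := by
  have hk0 : (0:ℝ) < (k:ℝ) := by exact_mod_cast hk1.trans_lt' Nat.zero_lt_one
  have hk1' : (1:ℝ) ≤ (k:ℝ) := by exact_mod_cast hk1
  set S : ℝ := ∑ j, f j ^ 2 with hS
  set cc : Fin n → ℝ := fun j => ∑ l, Uk j l ^ 2 with hcc
  have hcoh : ∀ j, localCoherence Uk j ^ 2 = cc j := by
    intro j
    rw [localCoherence, Real.sq_sqrt (Finset.sum_nonneg fun l _ => sq_nonneg _)]
    simp [Matrix.mulVec_single_one, Matrix.transpose_apply, hcc]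
  have hSpos : 0 < S := by
    apply Finset.sum_pos' (fun j _ => sq_nonneg _)
    exact ⟨i, Finset.mem_univ i,
      lt_of_le_of_ne (sq_nonneg _) (Ne.symm (pow_ne_zero 2 (hfne i)))⟩
  have hpfpos : ∀ j, 0 < pf j := by
    intro j
    rw [hpf]
    exact div_pos (lt_of_le_of_ne (sq_nonneg _) (Ne.symm (pow_ne_zero 2 (hfne j)))) hSpos
  have hpfsum : ∑ j, pf j = 1 := by
    simp only [hpf]
    rw [← Finset.sum_div, div_self hSpos.ne']
  have hδfpos : 0 < δf := by
    obtain ⟨j, hj⟩ := hδf.1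
    rw [← hj]; exact hpfpos j
  have hδfle : ∀ j, δf ≤ pf j := fun j => hδf.2 ⟨j, rfl⟩
  have hpfle1 : ∀ j, pf j ≤ 1 := by
    intro j
    rw [← hpfsum]
    exact Finset.single_le_sum (fun l _ => (hpfpos l).le) (Finset.mem_univ j)
  have hδle1 : δf ≤ 1 := (hδfle i).trans (hpfle1 i)
  have hccsum : ∑ j, cc j = (k:ℝ) := by
    rw [hcc, Finset.sum_comm]
    have h : ∀ l, ∑ j, Uk j l ^ 2 = (Uk.transpose * Uk) l l := by
      intro l; rw [Matrix.mul_apply]; simp [sq, Matrix.transpose_apply]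
    simp [h, hU, Matrix.one_apply]
  have hSα : S = ∑ l, α l ^ 2 := by
    have h1 : S = dotProduct (Uk.mulVec α) (Uk.mulVec α) := by
      simp [hS, hf, dotProduct, sq]
    have h2 : dotProduct (Uk.mulVec α) (Uk.mulVec α) = dotProduct α α := by
      rw [Matrix.dotProduct_mulVec, ← Matrix.mulVec_transpose, Matrix.mulVec_mulVec, hU,
        Matrix.one_mulVec]
    rw [h1, h2]; simp [dotProduct, sq]
  have hpflecc : ∀ j, pf j ≤ cc j := by
    intro j
    have hfj : f j ^ 2 ≤ cc j * S := by
      have : f j = ∑ l, Uk j l * α l := by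
        rw [hf]; rfl
      rw [this, hSα, hcc]
      exact Finset.sum_mul_sq_le_sq_mul_sq Finset.univ _ _
    rw [hpf, div_le_iff₀ hSpos]
    exact hfj
  have hccpos : ∀ j, 0 < cc j := fun j => lt_of_lt_of_le (hpfpos j) (hpflecc j)
  set D : Fin n → ℝ := fun a => ∑ l, W a l * cc l with hD
  have hQ'2 : ∀ a b, Q' a b = W a b * cc b / D a := by
    intro a b; rw [hQ']; simp only [hcoh, hD]
  have hWnn : ∀ a b, 0 ≤ W a b := by
    intro a b; rcases hW01 a b with h | h <;> rw [h] <;> norm_num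
  have hDle : ∀ a, D a ≤ (k:ℝ) := by
    intro a
    rw [← hccsum, hD]
    apply Finset.sum_le_sum
    intro l _
    rcases hW01 a l with h | h <;> rw [h] <;> simp [(hccpos l).le]
  have hDpos : ∀ a, 0 < D a := by
    intro a
    obtain ⟨l₀, hl₀⟩ : ∃ l, W a l = 1 := by
      by_contra h
      push_neg at h
      have h0 : ∀ l, W a l = 0 := fun l => (hW01 a l).resolve_right (h l)
      have := hdegpos a
      simp [h0] at this
    calc (0:ℝ) < cc l₀ := hccpos l₀
      _ = W a l₀ * cc l₀ := by rw [hl₀, one_mul]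
      _ ≤ D a := Finset.single_le_sum
          (f := fun l => W a l * cc l)
          (fun l _ => mul_nonneg (hWnn a l) (hccpos l).le) (Finset.mem_univ l₀)
  have hQnn : ∀ a b, 0 ≤ Q' a b := by
    intro a b
    rw [hQ'2]
    exact div_nonneg (mul_nonneg (hWnn a b) (hccpos b).le) (hDpos a).le
  have hQlb : ∀ a b, W a b = 1 → pf b / k ≤ Q' a b := by
    intro a b h
    rw [hQ'2, h, one_mul]
    calc pf b / (k:ℝ) ≤ cc b / (k:ℝ) := by gcongr; exact hpflecc b
      _ ≤ cc b / D a := by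
          apply div_le_div_of_nonneg_left (hccpos b).le (hDpos a) (hDle a)
  have hQpos : ∀ a b, W a b = 1 → 0 < Q' a b := fun a b h =>
    lt_of_lt_of_le (div_pos (hpfpos b) hk0) (hQlb a b h)
  have hQrow : ∀ a, ∑ b, Q' a b = 1 := by
    intro a
    simp only [hQ'2]
    have hDa : ∑ b, W a b * cc b = D a := rfl
    rw [← Finset.sum_div, hDa, div_self (hDpos a).ne']
  have hPoffle : ∀ a b, b ≠ a → P a b ≤ Q' a b := by
    intro a b hba
    rcases hW01 a b with h | h
    · rw [hP0 a b hba h]; exact hQnn a b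
    · rw [hP1 a b hba h]
      exact mul_le_of_le_one_right (hQnn a b) (min_le_left _ _)
  have hPoffnn : ∀ a b, b ≠ a → 0 ≤ P a b := by
    intro a b hba
    rcases hW01 a b with h | h
    · rw [hP0 a b hba h]
    · rw [hP1 a b hba h]
      exact mul_nonneg (hQnn a b) (le_min zero_le_one
        (div_nonneg (mul_nonneg (hpfpos b).le (hQnn b a))
          (mul_nonneg (hpfpos a).le (hQnn a b))))
  have hPnn : ∀ a b, 0 ≤ P a b := by
    intro a b
    by_cases hba : b = a
    · subst hba
      rw [hPdiag]
      have hle : ∑ j ∈ Finset.univ.erase b, P b j ≤ 1 := by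
        calc ∑ j ∈ Finset.univ.erase b, P b j ≤ ∑ j ∈ Finset.univ.erase b, Q' b j :=
              Finset.sum_le_sum fun j hj => hPoffle b j (Finset.ne_of_mem_erase hj)
          _ ≤ ∑ j, Q' b j := Finset.sum_le_sum_of_subset_of_nonneg
              (Finset.erase_subset _ _) (fun j _ _ => hQnn b j)
          _ = 1 := hQrow b
      linarith
    · exact hPoffnn a b hba
  have hProw : ∀ a, ∑ b, P a b = 1 := by
    intro a
    rw [← Finset.add_sum_erase _ _ (Finset.mem_univ a), hPdiag]
    ring
  have hPlb : ∀ a b, W a b = 1 → pf b / k ≤ P a b := by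
    intro a b h
    have hba1 : W b a = 1 := by rw [hWsymm b a]; exact h
    have hne : b ≠ a := by
      intro e; subst e; rw [hWdiag] at h; norm_num at h
    rw [hP1 a b hne h]
    rcases min_cases 1 ((pf b * Q' b a) / (pf a * Q' a b)) with ⟨hm, _⟩ | ⟨hm, _⟩
    · rw [hm, mul_one]; exact hQlb a b h
    · rw [hm]
      have hq1 : Q' a b ≠ 0 := (hQpos a b h).ne'
      have hq2 : pf a ≠ 0 := (hpfpos a).ne'
      have hq : Q' a b * ((pf b * Q' b a) / (pf a * Q' a b)) = pf b * Q' b a / pf a := by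
        field_simp
      rw [hq]
      calc pf b / (k:ℝ) = pf b * (pf a / (k:ℝ)) / pf a := by
            field_simp
          _ ≤ pf b * Q' b a / pf a := by
            gcongr pf b * ?_ / pf a
            all_goals first
              | exact (hpfpos a).le
              | exact (hpfpos b).le
              | exact hQlb b a hba1
  have hkey : ∀ x y : ℝ, 0 < x → x * min 1 (y / x) = min x y := fun x y hx => by
    rw [mul_min_of_nonneg _ _ hx.le, mul_one, mul_div_cancel₀ _ hx.ne']
  have hrev : ∀ a b, pf a * P a b = pf b * P b a := by
    intro a b
    by_cases hab : a = b
    · subst hab; rfl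
    · have hba : b ≠ a := fun e => hab e.symm
      rcases hW01 a b with h | h
      · have h' : W b a = 0 := by rw [hWsymm b a]; exact h
        rw [hP0 a b hba h, hP0 b a hab h']
        ring
      · have h' : W b a = 1 := by rw [hWsymm b a]; exact h
        have ha : 0 < pf a * Q' a b := mul_pos (hpfpos a) (hQpos a b h)
        have hb : 0 < pf b * Q' b a := mul_pos (hpfpos b) (hQpos b a h')
        rw [hP1 a b hba h, hP1 b a hab h']
        calc pf a * (Q' a b * min 1 ((pf b * Q' b a) / (pf a * Q' a b)))
            = (pf a * Q' a b) * min 1 ((pf b * Q' b a) / (pf a * Q' a b)) := by ring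
          _ = min (pf a * Q' a b) (pf b * Q' b a) := hkey _ _ ha
          _ = min (pf b * Q' b a) (pf a * Q' a b) := min_comm _ _
          _ = (pf b * Q' b a) * min 1 ((pf a * Q' a b) / (pf b * Q' b a)) := (hkey _ _ hb).symm
          _ = pf b * (Q' b a * min 1 ((pf a * Q' a b) / (pf b * Q' b a))) := by ring
  have hstat : ∀ b, ∑ a, pf a * P a b = pf b := by
    intro b
    calc ∑ a, pf a * P a b = ∑ a, pf b * P b a := Finset.sum_congr rfl fun a _ => hrev a b
      _ = pf b * ∑ a, P b a := by rw [Finset.mul_sum]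
      _ = pf b := by rw [hProw b, mul_one]
  have hstatpow : ∀ m b, ∑ a, pf a * (P ^ m) a b = pf b := by
    intro m
    induction m with
    | zero => intro b; simp [Matrix.one_apply]
    | succ m ih =>
      intro b
      simp only [pow_succ, Matrix.mul_apply, Finset.mul_sum]
      rw [Finset.sum_comm]
      calc ∑ c, ∑ a, pf a * ((P ^ m) a c * P c b)
          = ∑ c, (∑ a, pf a * (P ^ m) a c) * P c b := by
            apply Finset.sum_congr rfl; intro c _
            rw [Finset.sum_mul]
            apply Finset.sum_congr rfl; intros; ring
        _ = ∑ c, pf c * P c b := by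
            apply Finset.sum_congr rfl; intro c _; rw [ih c]
        _ = pf b := hstat b
  obtain ⟨m, rfl⟩ : ∃ m, r = m + 1 := ⟨r - 1, (Nat.succ_pred_eq_of_pos hr1).symm⟩
  set ε : ℝ := δf ^ m / (k:ℝ) ^ (m + 1) with hε
  have hεpos : 0 < ε := div_pos (pow_pos hδfpos m) (pow_pos hk0 _)
  have hεle1 : ε ≤ 1 := by
    rw [hε, div_le_one (pow_pos hk0 _)]
    calc δf ^ m ≤ 1 := pow_le_one₀ hδfpos.le hδle1
      _ ≤ (k:ℝ) ^ (m + 1) := one_le_pow₀ hk1'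
  have hminor : ∀ a b, ε * pf b ≤ (P ^ (m + 1)) a b := by
    intro a b
    obtain ⟨v, hv0, hvlast, hvW⟩ := hWconn a b
    have hwalk := pow_ge_walk' hPnn (m + 1) v
    rw [hv0, hvlast] at hwalk
    refine le_trans ?_ hwalk
    rw [Fin.prod_univ_castSucc]
    have hstep : ∀ l : Fin (m + 1), pf (v l.succ) / k ≤ P (v l.castSucc) (v l.succ) :=
      fun l => hPlb _ _ (hvW l)
    have h1 : (δf / (k:ℝ)) ^ m ≤ ∏ l : Fin m, P (v l.castSucc.castSucc) (v l.castSucc.succ) := by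
      calc (δf / (k:ℝ)) ^ m = ∏ _l : Fin m, (δf / (k:ℝ)) := by
            rw [Finset.prod_const, Finset.card_univ, Fintype.card_fin]
        _ ≤ ∏ l : Fin m, P (v l.castSucc.castSucc) (v l.castSucc.succ) := by
            apply Finset.prod_le_prod (fun l _ => (div_pos hδfpos hk0).le)
            intro l _
            calc δf / (k:ℝ) ≤ pf (v l.castSucc.succ) / (k:ℝ) := by
                  gcongr; exact hδfle _
              _ ≤ P (v l.castSucc.castSucc) (v l.castSucc.succ) := hstep l.castSucc
    have hvb : v (Fin.last m).succ = b := by rw [Fin.succ_last]; exact hvlast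
    rw [hvb]
    have h2 : pf b / (k:ℝ) ≤ P (v (Fin.last m).castSucc) b := by
      have hs := hstep (Fin.last m)
      rwa [hvb] at hs
    calc ε * pf b = (δf / (k:ℝ)) ^ m * (pf b / (k:ℝ)) := by
          rw [hε, div_pow, pow_succ]
          field_simp
      _ ≤ (∏ l : Fin m, P (v l.castSucc.castSucc) (v l.castSucc.succ)) *
            P (v (Fin.last m).castSucc) b := by
          apply mul_le_mul h1 h2 (div_nonneg (hpfpos b).le hk0.le)
          exact Finset.prod_nonneg fun l _ => hPnn _ _
  have hεsum : ∑ b, ε * pf b = ε := by rw [← Finset.mul_sum, hpfsum, mul_one]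
  have hνsum : ∀ s, ∑ b, ((P ^ s) i b - pf b) = 0 := by
    intro s
    rw [Finset.sum_sub_distrib, pow_row_sum' hProw s i, hpfsum]
    ring
  have hνrec : ∀ s q b, (P ^ (s + q)) i b - pf b
      = ∑ a, ((P ^ s) i a - pf a) * (P ^ q) a b := by
    intro s q b
    rw [pow_add, Matrix.mul_apply]
    have h : ∑ a, ((P ^ s) i a - pf a) * (P ^ q) a b
        = ∑ a, (P ^ s) i a * (P ^ q) a b - ∑ a, pf a * (P ^ q) a b := by
      rw [← Finset.sum_sub_distrib]
      apply Finset.sum_congr rfl; intros; ring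
    rw [h, hstatpow q b]
  have hcontr : ∀ s, ∑ b, |(P ^ (s + (m + 1))) i b - pf b|
      ≤ (1 - ε) * ∑ b, |(P ^ s) i b - pf b| := by
    intro s
    have hc := tv_contract' (P ^ (m + 1)) (fun b => ε * pf b) hminor
      (pow_row_sum' hProw (m + 1)) (fun a => (P ^ s) i a - pf a) (hνsum s)
    rw [hεsum] at hc
    calc ∑ b, |(P ^ (s + (m + 1))) i b - pf b|
        = ∑ b, |∑ a, ((P ^ s) i a - pf a) * (P ^ (m + 1)) a b| := by
          apply Finset.sum_congr rfl; intro b _; rw [hνrec]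
      _ ≤ (1 - ε) * ∑ a, |(P ^ s) i a - pf a| := hc
  have hmono : ∀ s q, ∑ b, |(P ^ (s + q)) i b - pf b| ≤ ∑ b, |(P ^ s) i b - pf b| := by
    intro s q
    have hc := tv_contract' (P ^ q) (fun _ => 0)
      (fun a b => pow_entry_nonneg' hPnn q a b) (pow_row_sum' hProw q)
      (fun a => (P ^ s) i a - pf a) (hνsum s)
    simp only [Finset.sum_const_zero, sub_zero, one_mul] at hc
    calc ∑ b, |(P ^ (s + q)) i b - pf b|
        = ∑ b, |∑ a, ((P ^ s) i a - pf a) * (P ^ q) a b| := by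
          apply Finset.sum_congr rfl; intro b _; rw [hνrec]
      _ ≤ ∑ a, |(P ^ s) i a - pf a| := hc
  have hν0 : ∑ b, |(P ^ 0) i b - pf b| ≤ 2 := by
    calc ∑ b, |(P ^ 0) i b - pf b| ≤ ∑ b, (|(P ^ 0) i b| + |pf b|) :=
          Finset.sum_le_sum fun b _ => abs_sub _ _
      _ = ∑ b, (P ^ 0) i b + ∑ b, pf b := by
          rw [Finset.sum_add_distrib]
          congr 1
          apply Finset.sum_congr rfl; intro b _
          · exact abs_of_nonneg (pow_entry_nonneg' hPnn 0 i b)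
          · apply Finset.sum_congr rfl; intro b _
            exact abs_of_nonneg (hpfpos b).le
      _ = 2 := by rw [pow_row_sum' hProw 0 i, hpfsum]; norm_num
  have hiter : ∀ q, ∑ b, |(P ^ ((m + 1) * q)) i b - pf b|
      ≤ (1 - ε) ^ q * ∑ b, |(P ^ 0) i b - pf b| := by
    intro q
    induction q with
    | zero => simp
    | succ q ih =>
      have h1 : (m + 1) * (q + 1) = (m + 1) * q + (m + 1) := by ring
      rw [h1]
      calc ∑ b, |(P ^ ((m + 1) * q + (m + 1))) i b - pf b|
          ≤ (1 - ε) * ∑ b, |(P ^ ((m + 1) * q)) i b - pf b| := hcontr _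
        _ ≤ (1 - ε) * ((1 - ε) ^ q * ∑ b, |(P ^ 0) i b - pf b|) :=
            mul_le_mul_of_nonneg_left ih (by linarith)
        _ = (1 - ε) ^ (q + 1) * ∑ b, |(P ^ 0) i b - pf b| := by ring
  have hfin : ∑ b, |(P ^ t) i b - pf b| ≤ (1 - ε) ^ (t / (m + 1)) * 2 := by
    have ht : (m + 1) * (t / (m + 1)) + t % (m + 1) = t := Nat.div_add_mod t (m + 1)
    calc ∑ b, |(P ^ t) i b - pf b|
        = ∑ b, |(P ^ ((m + 1) * (t / (m + 1)) + t % (m + 1))) i b - pf b| := by rw [ht]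
      _ ≤ ∑ b, |(P ^ ((m + 1) * (t / (m + 1)))) i b - pf b| := hmono _ _
      _ ≤ (1 - ε) ^ (t / (m + 1)) * ∑ b, |(P ^ 0) i b - pf b| := hiter _
      _ ≤ (1 - ε) ^ (t / (m + 1)) * 2 :=
          mul_le_mul_of_nonneg_left hν0 (pow_nonneg (by linarith) _)
  have hexp : m + 1 - 1 = m := by omega
  rw [hexp, ← hε]
  linarith
end

section
/- (Convergence of the Laplacian walk, ε-approximate case.) If f is ε-approximately k-smooth and nonzero at every vertex, the Laplacian-walk Metropolis–Hastings chain built from the modified proposal converges to p_f in total variation at the rate ‖P^t_{i*} − p_f‖_TV ≤ (1 − δ_f^{r−1}/M^r)^{⌊t/r⌋} for every starting vertex i ∈ V and every t ≥ 0, where M = k + 2k√n ε + n ε² and δ_f = min_i p_f(i). -/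
namespace LapWalkAux

variable {n : ℕ}

lemma pow_nonneg_entries (P : Matrix (Fin n) (Fin n) ℝ) (hP : ∀ a b, 0 ≤ P a b) :
    ∀ (m : ℕ) (a b : Fin n), 0 ≤ (P ^ m) a b := by
  intro m
  induction m with
  | zero => intro a b; simp [Matrix.one_apply]; positivity
  | succ m ih =>
      intro a b
      rw [pow_succ, Matrix.mul_apply]
      exact Finset.sum_nonneg fun x _ => mul_nonneg (ih a x) (hP x b)

lemma pow_row_sum (P : Matrix (Fin n) (Fin n) ℝ) (hP : ∀ a, ∑ b, P a b = 1) :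
    ∀ (m : ℕ) (a : Fin n), ∑ b, (P ^ m) a b = 1 := by
  intro m
  induction m with
  | zero => intro a; simp [Matrix.one_apply]
  | succ m ih =>
      intro a
      rw [pow_succ]
      simp only [Matrix.mul_apply]
      rw [Finset.sum_comm]
      simp_rw [← Finset.mul_sum, hP]
      simpa using ih a

lemma pow_stationary (P : Matrix (Fin n) (Fin n) ℝ) (pf : Fin n → ℝ)
    (hstat : ∀ j, ∑ x, pf x * P x j = pf j) :
    ∀ (m : ℕ) (j : Fin n), ∑ x, pf x * (P ^ m) x j = pf j := by
  intro m
  induction m with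
  | zero => intro j; simp [Matrix.one_apply]
  | succ m ih =>
      intro j
      rw [pow_succ]
      simp only [Matrix.mul_apply]
      calc ∑ x, pf x * ∑ y, (P ^ m) x y * P y j
          = ∑ y, (∑ x, pf x * (P ^ m) x y) * P y j := by
            simp_rw [Finset.mul_sum, Finset.sum_mul]
            rw [Finset.sum_comm]
            apply Finset.sum_congr rfl; intro x _
            apply Finset.sum_congr rfl; intro y _
            ring
        _ = pf j := by
            simp_rw [ih]
            exact hstat j

lemma pow_entry_ge_path (P : Matrix (Fin n) (Fin n) ℝ) (hP : ∀ a b, 0 ≤ P a b) :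
    ∀ (m : ℕ) (v : Fin (m + 1) → Fin n),
      (∏ l : Fin m, P (v l.castSucc) (v l.succ)) ≤ (P ^ m) (v 0) (v (Fin.last m)) := by
  intro m
  induction m with
  | zero => intro v; simp [Matrix.one_apply]
  | succ m ih =>
      intro v
      have hprod := Fin.prod_univ_castSucc (fun l : Fin (m + 1) => P (v l.castSucc) (v l.succ))
      rw [hprod]
      set w : Fin (m + 1) → Fin n := fun l => v l.castSucc with hw
      have hw0 : w 0 = v 0 := rfl
      have hfac : (∏ l : Fin m, P (v l.castSucc.castSucc) (v l.castSucc.succ))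
          = ∏ l : Fin m, P (w l.castSucc) (w l.succ) := by
        apply Finset.prod_congr rfl
        intro l _
        simp only [hw, Fin.succ_castSucc]
      rw [hfac]
      have h1 := ih w
      have hlast : v (Fin.last m).succ = v (Fin.last (m + 1)) := rfl
      have hwl : v (Fin.last m).castSucc = w (Fin.last m) := rfl
      calc (∏ l : Fin m, P (w l.castSucc) (w l.succ)) * P (v (Fin.last m).castSucc) (v (Fin.last m).succ)
          ≤ (P ^ m) (w 0) (w (Fin.last m)) * P (v (Fin.last m).castSucc) (v (Fin.last m).succ) := by
            apply mul_le_mul_of_nonneg_right h1 (hP _ _)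
        _ = (P ^ m) (v 0) (w (Fin.last m)) * P (w (Fin.last m)) (v (Fin.last (m+1))) := by
            rw [hw0, hlast, hwl]
        _ ≤ ∑ x, (P ^ m) (v 0) x * P x (v (Fin.last (m+1))) := by
            apply Finset.single_le_sum (f := fun x => (P ^ m) (v 0) x * P x (v (Fin.last (m+1))))
            · intro x _; exact mul_nonneg (pow_nonneg_entries P hP m _ _) (hP _ _)
            · exact Finset.mem_univ _
        _ = (P ^ (m + 1)) (v 0) (v (Fin.last (m + 1))) := by rw [pow_succ, Matrix.mul_apply]

end LapWalkAux


set_option maxHeartbeats 4000000 in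
/-- Convergence of the Laplacian walk, `ε`-approximate case: if `f` is
`ε`-approximately `k`-smooth and nonzero at every vertex, the Laplacian-walk
Metropolis–Hastings chain built from the modified proposal converges to `p_f` in total
variation at the rate `‖P^t_{i*} − p_f‖_TV ≤ (1 − δ_f^{r−1}/M^r)^⌊t/r⌋` for every
starting vertex `i` and every `t ≥ 0`, where `M = k + 2k√n ε + n ε²` and
`δ_f = min_i p_f(i)`.  Here `r` is the diameter of the graph, and (as in the paper)
every pair of vertices is joined by a walk of length exactly `r`. -/
theorem laplacian_walk_tv_convergence_approx_ksmooth
    {n : ℕ} (hn : 2 ≤ n)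
    (W : Matrix (Fin n) (Fin n) ℝ)
    (hWsymm : ∀ i j, W i j = W j i)
    (hW01 : ∀ i j, W i j = 0 ∨ W i j = 1)
    (hWdiag : ∀ i, W i i = 0)
    (hdegpos : ∀ i, 0 < ∑ j, W i j)
    (r : ℕ) (hr1 : 1 ≤ r)
    (hWconn : ∀ i j : Fin n, ∃ v : Fin (r + 1) → Fin n,
      v 0 = i ∧ v (Fin.last r) = j ∧ ∀ l : Fin r, W (v l.castSucc) (v l.succ) = 1)
    {k : ℕ} (hk1 : 1 ≤ k) (hkn : k ≤ n)
    (Uk : Matrix (Fin n) (Fin k) ℝ)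
    (hU : Uk.transpose * Uk = 1)
    (f : Fin n → ℝ) (ε : ℝ) (hε : 0 < ε)
    (fks : Fin n → ℝ) (hfks : fks = Uk.mulVec (Uk.transpose.mulVec f))
    (happrox : ∀ i, |f i - fks i| ≤ ε * Real.sqrt (∑ j, fks j ^ 2))
    (hfne : ∀ i, f i ≠ 0)
    (pf : Fin n → ℝ) (hpf : ∀ i, pf i = f i ^ 2 / ∑ j, f j ^ 2)
    (δf : ℝ) (hδf : IsLeast (Set.range pf) δf)
    (Q' : Matrix (Fin n) (Fin n) ℝ)
    (hQ' : ∀ i j, Q' i j =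
      W i j * (localCoherence Uk j + ε) ^ 2 / ∑ l, W i l * (localCoherence Uk l + ε) ^ 2)
    (P : Matrix (Fin n) (Fin n) ℝ)
    (hP1 : ∀ i j, j ≠ i → W i j = 1 →
      P i j = Q' i j * min 1 ((pf j * Q' j i) / (pf i * Q' i j)))
    (hP0 : ∀ i j, j ≠ i → W i j = 0 → P i j = 0)
    (hPdiag : ∀ i, P i i = 1 - ∑ j ∈ Finset.univ.erase i, P i j)
    (i : Fin n) (t : ℕ) :
    (1 / 2) * ∑ j, |(P ^ t) i j - pf j| ≤
      (1 - δf ^ (r - 1) / ((k : ℝ) + 2 * k * Real.sqrt n * ε + n * ε ^ 2) ^ r) ^ (t / r) := by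
  -- notation
  set F : ℝ := ∑ j, f j ^ 2 with hF_def
  set M : ℝ := (k : ℝ) + 2 * k * Real.sqrt n * ε + n * ε ^ 2 with hM_def
  set u : Fin n → ℝ := localCoherence Uk with hu_def
  set S : Fin n → ℝ := fun a => ∑ l, W a l * (u l + ε) ^ 2 with hS_def
  have hW_nonneg : ∀ a b, 0 ≤ W a b := by
    intro a b; rcases hW01 a b with h | h <;> rw [h] <;> norm_num
  have hF : 0 < F := by
    apply Finset.sum_pos
    · intro j _
      exact lt_of_le_of_ne (sq_nonneg (f j)) (Ne.symm (pow_ne_zero 2 (hfne j)))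
    · exact ⟨i, Finset.mem_univ i⟩
  have hpf_pos : ∀ j, 0 < pf j := by
    intro j; rw [hpf]
    exact div_pos (lt_of_le_of_ne (sq_nonneg (f j)) (Ne.symm (pow_ne_zero 2 (hfne j)))) hF
  have hpfsum : ∑ j, pf j = 1 := by
    simp_rw [hpf]; rw [← Finset.sum_div, div_self hF.ne']
  have hδf_le : ∀ j, δf ≤ pf j := fun j => hδf.2 ⟨j, rfl⟩
  have hδf_pos : 0 < δf := by
    obtain ⟨j, hj⟩ := hδf.1
    rw [← hj]; exact hpf_pos j
  -- coherence facts
  have hu_eq : ∀ a, u a = Real.sqrt (∑ l, Uk a l ^ 2) := by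
    intro a
    rw [hu_def]
    unfold localCoherence
    congr 1
    apply Finset.sum_congr rfl
    intro l _
    rw [Matrix.mulVec_single]
    simp [Matrix.transpose_apply]
  have hu_nonneg : ∀ a, 0 ≤ u a := by
    intro a; rw [hu_eq]; exact Real.sqrt_nonneg _
  have hu_sq : ∀ a, u a ^ 2 = ∑ l, Uk a l ^ 2 := by
    intro a; rw [hu_eq]
    exact Real.sq_sqrt (Finset.sum_nonneg fun l _ => sq_nonneg _)
  have husqsum : ∑ a, u a ^ 2 = (k : ℝ) := by
    simp_rw [hu_sq]
    rw [Finset.sum_comm]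
    have : ∀ l : Fin k, ∑ a, Uk a l ^ 2 = 1 := by
      intro l
      have := congrFun (congrFun hU l) l
      rw [Matrix.mul_apply, Matrix.one_apply_eq] at this
      rw [← this]
      apply Finset.sum_congr rfl
      intro a _
      rw [Matrix.transpose_apply]; ring
    simp_rw [this]
    simp
  have husum : ∑ a, u a ≤ (k : ℝ) * Real.sqrt n := by
    have hcs := Finset.sum_mul_sq_le_sq_mul_sq Finset.univ (fun _ : Fin n => (1 : ℝ)) u
    simp only [one_mul, one_pow] at hcs
    rw [husqsum] at hcs
    simp only [Finset.sum_const, Finset.card_univ, Fintype.card_fin, nsmul_eq_mul, mul_one] at hcs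
    have h1 : (0 : ℝ) ≤ ∑ a, u a := Finset.sum_nonneg fun a _ => hu_nonneg a
    have h2 : (0 : ℝ) ≤ Real.sqrt n := Real.sqrt_nonneg _
    have h3 : Real.sqrt n ^ 2 = n := Real.sq_sqrt (Nat.cast_nonneg n)
    have hk : (1 : ℝ) ≤ (k : ℝ) := by exact_mod_cast hk1
    have h4 : (∑ a, u a) ^ 2 ≤ ((k : ℝ) * Real.sqrt n) ^ 2 := by
      rw [mul_pow, h3]; nlinarith
    calc ∑ a, u a = Real.sqrt ((∑ a, u a) ^ 2) := (Real.sqrt_sq h1).symm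
      _ ≤ Real.sqrt (((k : ℝ) * Real.sqrt n) ^ 2) := Real.sqrt_le_sqrt h4
      _ = (k : ℝ) * Real.sqrt n := Real.sqrt_sq (by positivity)
  have hM1 : (1 : ℝ) ≤ M := by
    rw [hM_def]
    have hk : (1 : ℝ) ≤ (k : ℝ) := by exact_mod_cast hk1
    have : (0:ℝ) ≤ 2 * k * Real.sqrt n * ε := by positivity
    nlinarith [sq_nonneg ε, Nat.cast_nonneg (α := ℝ) n]
  have hM_pos : (0 : ℝ) < M := lt_of_lt_of_le one_pos hM1
  have hS_le : ∀ a, S a ≤ M := by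
    intro a
    rw [hS_def]
    calc ∑ l, W a l * (u l + ε) ^ 2 ≤ ∑ l, (u l + ε) ^ 2 := by
          apply Finset.sum_le_sum
          intro l _
          rcases hW01 a l with h | h <;> rw [h] <;> nlinarith [sq_nonneg (u l + ε)]
      _ = ∑ l, (u l ^ 2 + 2 * ε * u l + ε ^ 2) := by
          apply Finset.sum_congr rfl; intro l _; ring
      _ = (k : ℝ) + 2 * ε * (∑ l, u l) + n * ε ^ 2 := by
          rw [Finset.sum_add_distrib, Finset.sum_add_distrib, husqsum, ← Finset.mul_sum]
          simp [Finset.sum_const, Finset.card_univ, mul_comm]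
      _ ≤ M := by
          rw [hM_def]
          have := husum
          nlinarith [hε.le]
  have hedge : ∀ a, ∃ l, W a l = 1 := by
    intro a
    by_contra h
    push_neg at h
    have : ∀ l, W a l = 0 := by
      intro l; rcases hW01 a l with h0 | h1
      · exact h0
      · exact absurd h1 (h l)
    have hz : (∑ j, W a j) = 0 := Finset.sum_eq_zero fun l _ => this l
    have hp := hdegpos a
    rw [hz] at hp
    exact lt_irrefl 0 hp
  have hS_pos : ∀ a, 0 < S a := by
    intro a
    obtain ⟨l, hl⟩ := hedge a
    rw [hS_def]
    apply Finset.sum_pos'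
    · intro x _
      exact mul_nonneg (hW_nonneg a x) (sq_nonneg _)
    · refine ⟨l, Finset.mem_univ l, ?_⟩
      rw [hl, one_mul]
      exact pow_pos (by linarith [hu_nonneg l]) 2
  -- pointwise smoothness bound
  set c : Fin k → ℝ := Uk.transpose.mulVec f with hc_def
  have hswap : ∀ g : Fin n → ℝ, ∑ j, fks j * g j = ∑ l, c l * (Uk.transpose.mulVec g) l := by
    intro g
    calc ∑ j, fks j * g j
        = ∑ j, ∑ l, Uk j l * c l * g j := by
          apply Finset.sum_congr rfl; intro j _
          rw [hfks]
          simp only [Matrix.mulVec, dotProduct]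
          rw [Finset.sum_mul]
      _ = ∑ l, ∑ j, Uk j l * c l * g j := Finset.sum_comm
      _ = ∑ l, c l * (Uk.transpose.mulVec g) l := by
          apply Finset.sum_congr rfl; intro l _
          simp only [Matrix.mulVec, dotProduct, Matrix.transpose_apply]
          rw [Finset.mul_sum]
          apply Finset.sum_congr rfl; intro j _; ring
  have hcfks : Uk.transpose.mulVec fks = c := by
    rw [hfks, Matrix.mulVec_mulVec, hU, Matrix.one_mulVec]
  have hfksq : ∑ j, fks j ^ 2 = ∑ l, c l ^ 2 := by
    have := hswap fks
    rw [hcfks] at this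
    simpa [sq] using this
  have hfksf : ∑ j, fks j * f j = ∑ l, c l ^ 2 := by
    have := hswap f
    rw [← hc_def] at this
    simpa [sq] using this
  have hfks_le : ∑ j, fks j ^ 2 ≤ F := by
    have hexp : ∑ j, (f j - fks j) ^ 2
        = F - 2 * (∑ j, fks j * f j) + ∑ j, fks j ^ 2 := by
      calc ∑ j, (f j - fks j) ^ 2
          = ∑ j, (f j ^ 2 - 2 * (fks j * f j) + fks j ^ 2) := by
            apply Finset.sum_congr rfl; intro j _; ring
        _ = (∑ j, f j ^ 2) - ∑ j, 2 * (fks j * f j) + ∑ j, fks j ^ 2 := by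
            rw [Finset.sum_add_distrib, Finset.sum_sub_distrib]
        _ = F - 2 * (∑ j, fks j * f j) + ∑ j, fks j ^ 2 := by
            rw [← Finset.mul_sum, ← hF_def]
    have h0 : (0:ℝ) ≤ ∑ j, (f j - fks j) ^ 2 := Finset.sum_nonneg fun j _ => sq_nonneg _
    rw [hexp, hfksf, ← hfksq] at h0
    linarith
  have hfks_pt : ∀ j, |fks j| ≤ u j * Real.sqrt (∑ l, fks l ^ 2) := by
    intro j
    have hfj : fks j = ∑ l, Uk j l * c l := by
      rw [hfks]; rfl
    have hcs := Finset.sum_mul_sq_le_sq_mul_sq Finset.univ (fun l => Uk j l) c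
    rw [← hfj, ← hu_sq j] at hcs
    have h1 : |fks j| = Real.sqrt (fks j ^ 2) := (Real.sqrt_sq_eq_abs _).symm
    rw [h1, hfksq]
    calc Real.sqrt (fks j ^ 2) ≤ Real.sqrt (u j ^ 2 * ∑ l, c l ^ 2) := Real.sqrt_le_sqrt hcs
      _ = u j * Real.sqrt (∑ l, c l ^ 2) := by
          rw [Real.sqrt_mul (sq_nonneg _), Real.sqrt_sq (hu_nonneg j)]
  have hf_pt : ∀ j, |f j| ≤ (u j + ε) * Real.sqrt F := by
    intro j
    have h1 : |f j| ≤ |fks j| + |f j - fks j| := by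
      have := abs_add_le (fks j) (f j - fks j)
      simpa [add_sub_cancel] using this
    have h2 : Real.sqrt (∑ l, fks l ^ 2) ≤ Real.sqrt F := Real.sqrt_le_sqrt hfks_le
    have h3 := hfks_pt j
    have h4 := happrox j
    have h5 : 0 ≤ Real.sqrt (∑ l, fks l ^ 2) := Real.sqrt_nonneg _
    calc |f j| ≤ u j * Real.sqrt (∑ l, fks l ^ 2) + ε * Real.sqrt (∑ l, fks l ^ 2) := by
          linarith
      _ = (u j + ε) * Real.sqrt (∑ l, fks l ^ 2) := by ring
      _ ≤ (u j + ε) * Real.sqrt F := by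
          apply mul_le_mul_of_nonneg_left h2
          linarith [hu_nonneg j, hε.le]
  have hpf_le : ∀ j, pf j ≤ (u j + ε) ^ 2 := by
    intro j
    rw [hpf]
    rw [div_le_iff₀ hF]
    have h1 := hf_pt j
    have h2 : f j ^ 2 ≤ ((u j + ε) * Real.sqrt F) ^ 2 := by
      rw [← sq_abs (f j)]
      apply pow_le_pow_left₀ (abs_nonneg _) h1
    calc f j ^ 2 ≤ ((u j + ε) * Real.sqrt F) ^ 2 := h2
      _ = (u j + ε) ^ 2 * F := by
          rw [mul_pow, Real.sq_sqrt hF.le]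
  -- Q' and P facts
  have hQ'edge : ∀ a b, W a b = 1 → Q' a b = (u b + ε) ^ 2 / S a := by
    intro a b h
    rw [hQ' a b, h, one_mul]
  have hQ'nonneg : ∀ a b, 0 ≤ Q' a b := by
    intro a b
    rw [hQ' a b]
    exact div_nonneg (mul_nonneg (hW_nonneg a b) (sq_nonneg _)) (hS_pos a).le
  have huε_pos : ∀ b, 0 < (u b + ε) ^ 2 := fun b => pow_pos (by linarith [hu_nonneg b]) 2
  have hQ'pos : ∀ a b, W a b = 1 → 0 < Q' a b := by
    intro a b h
    rw [hQ'edge a b h]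
    exact div_pos (huε_pos b) (hS_pos a)
  have hQ'row : ∀ a, ∑ b, Q' a b = 1 := by
    intro a
    simp_rw [hQ' a]
    rw [← Finset.sum_div]
    exact div_self (hS_pos a).ne'
  have hQ'diag : ∀ a, Q' a a = 0 := by
    intro a; rw [hQ' a a, hWdiag, zero_mul, zero_div]
  have hQ'lb : ∀ a b, W a b = 1 → pf b / M ≤ Q' a b := by
    intro a b h
    rw [hQ'edge a b h]
    exact div_le_div₀ (sq_nonneg _) (hpf_le b) (hS_pos a) (hS_le a)
  have hne : ∀ a b, W a b = 1 → b ≠ a := by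
    intro a b h hba
    rw [hba, hWdiag] at h
    norm_num at h
  have hP_le_Q : ∀ a b, b ≠ a → P a b ≤ Q' a b := by
    intro a b hab
    rcases hW01 a b with h0 | h1
    · rw [hP0 a b hab h0]; exact hQ'nonneg a b
    · rw [hP1 a b hab h1]
      calc Q' a b * min 1 ((pf b * Q' b a) / (pf a * Q' a b))
          ≤ Q' a b * 1 := by
            apply mul_le_mul_of_nonneg_left (min_le_left _ _) (hQ'nonneg a b)
        _ = Q' a b := mul_one _
  have hP_edge : ∀ a b, W a b = 1 → pf b / M ≤ P a b := by
    intro a b h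
    have h' : W b a = 1 := by rw [← hWsymm a b]; exact h
    rw [hP1 a b (hne a b h) h]
    rw [mul_min_of_nonneg _ _ (hQ'nonneg a b), mul_one]
    apply le_min
    · exact hQ'lb a b h
    · have heq : Q' a b * ((pf b * Q' b a) / (pf a * Q' a b)) = pf b * Q' b a / pf a := by
        field_simp [(hpf_pos a).ne', (hQ'pos a b h).ne']
      rw [heq, div_le_div_iff₀ hM_pos (hpf_pos a)]
      have h3 : pf a ≤ Q' b a * M := (div_le_iff₀ hM_pos).mp (hQ'lb b a h')
      nlinarith [(hpf_pos b).le]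
  have hP_nonneg : ∀ a b, 0 ≤ P a b := by
    intro a b
    by_cases hab : b = a
    · subst hab
      rw [hPdiag b]
      have hsum : ∑ j ∈ Finset.univ.erase b, P b j ≤ 1 := by
        calc ∑ j ∈ Finset.univ.erase b, P b j
            ≤ ∑ j ∈ Finset.univ.erase b, Q' b j := by
              apply Finset.sum_le_sum
              intro j hj
              exact hP_le_Q b j (Finset.ne_of_mem_erase hj)
          _ ≤ ∑ j, Q' b j := by
              apply Finset.sum_le_sum_of_subset_of_nonneg (Finset.erase_subset _ _)
              intro j _ _
              exact hQ'nonneg b j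
          _ = 1 := hQ'row b
      linarith
    · rcases hW01 a b with h0 | h1
      · rw [hP0 a b hab h0]
      · exact le_trans (div_nonneg (hpf_pos b).le hM_pos.le) (hP_edge a b h1)
  have hProw : ∀ a, ∑ b, P a b = 1 := by
    intro a
    rw [← Finset.add_sum_erase Finset.univ (P a) (Finset.mem_univ a), hPdiag a]
    ring
  have hrev : ∀ a b, pf a * P a b = pf b * P b a := by
    have key : ∀ (x y : ℝ), 0 < x → x * min 1 (y / x) = min x y := by
      intro x y hx
      rw [mul_min_of_nonneg _ _ hx.le, mul_one, mul_div_cancel₀ y hx.ne']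
    intro a b
    by_cases hab : b = a
    · subst hab; rfl
    rcases hW01 a b with h0 | h1
    · rw [hP0 a b hab h0, hP0 b a (Ne.symm hab) (by rw [← hWsymm a b]; exact h0),
        mul_zero, mul_zero]
    · have h1' : W b a = 1 := by rw [← hWsymm a b]; exact h1
      rw [hP1 a b hab h1, hP1 b a (Ne.symm hab) h1']
      have hx : 0 < pf a * Q' a b := mul_pos (hpf_pos a) (hQ'pos a b h1)
      have hy : 0 < pf b * Q' b a := mul_pos (hpf_pos b) (hQ'pos b a h1')
      calc pf a * (Q' a b * min 1 (pf b * Q' b a / (pf a * Q' a b)))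
          = (pf a * Q' a b) * min 1 (pf b * Q' b a / (pf a * Q' a b)) := by ring
        _ = min (pf a * Q' a b) (pf b * Q' b a) := key _ _ hx
        _ = min (pf b * Q' b a) (pf a * Q' a b) := min_comm _ _
        _ = (pf b * Q' b a) * min 1 (pf a * Q' a b / (pf b * Q' b a)) := (key _ _ hy).symm
        _ = pf b * (Q' b a * min 1 (pf a * Q' a b / (pf b * Q' b a))) := by ring
  have hstat : ∀ j, ∑ x, pf x * P x j = pf j := by
    intro j
    calc ∑ x, pf x * P x j = ∑ x, pf j * P j x := by
          apply Finset.sum_congr rfl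
          intro x _
          exact hrev x j
      _ = pf j * ∑ x, P j x := (Finset.mul_sum _ _ _).symm
      _ = pf j := by rw [hProw j, mul_one]
  -- minorization
  set α : ℝ := δf ^ (r - 1) / M ^ r with hα_def
  have hα_nonneg : 0 ≤ α := by
    rw [hα_def]
    exact div_nonneg (pow_nonneg hδf_pos.le _) (pow_nonneg hM_pos.le _)
  have hminor : ∀ a b, α * pf b ≤ (P ^ r) a b := by
    intro a b
    obtain ⟨m, rfl⟩ : ∃ m, r = m + 1 := ⟨r - 1, by omega⟩
    obtain ⟨v, hv0, hvlast, hve⟩ := hWconn a b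
    have step1 : ∀ l : Fin (m + 1), pf (v l.succ) / M ≤ P (v l.castSucc) (v l.succ) :=
      fun l => hP_edge _ _ (hve l)
    have step2 : (∏ l : Fin (m + 1), (pf (v l.succ) / M))
        ≤ ∏ l : Fin (m + 1), P (v l.castSucc) (v l.succ) := by
      apply Finset.prod_le_prod
      · intro l _
        exact div_nonneg (hpf_pos _).le hM_pos.le
      · intro l _
        exact step1 l
    have step3 : (∏ l : Fin (m + 1), P (v l.castSucc) (v l.succ))
        ≤ (P ^ (m + 1)) a b := by
      have := LapWalkAux.pow_entry_ge_path P hP_nonneg (m + 1) v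
      rwa [hv0, hvlast] at this
    have step4 : α * pf b ≤ ∏ l : Fin (m + 1), (pf (v l.succ) / M) := by
      rw [Finset.prod_div_distrib, Finset.prod_const, Finset.card_univ, Fintype.card_fin]
      have hprod : δf ^ m * pf b ≤ ∏ l : Fin (m + 1), pf (v l.succ) := by
        rw [Fin.prod_univ_castSucc (fun l : Fin (m + 1) => pf (v l.succ))]
        have hlast : v (Fin.last m).succ = b := by
          rw [← hvlast]; rfl
        rw [hlast]
        apply mul_le_mul_of_nonneg_right _ (hpf_pos b).le
        calc δf ^ m = ∏ _l : Fin m, δf := by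
              rw [Finset.prod_const, Finset.card_univ, Fintype.card_fin]
          _ ≤ ∏ l : Fin m, pf (v l.castSucc.succ) := by
              apply Finset.prod_le_prod
              · intro l _; exact hδf_pos.le
              · intro l _; exact hδf_le _
      have hMpow : (0:ℝ) < M ^ (m + 1) := pow_pos hM_pos _
      rw [hα_def]
      have hm : m + 1 - 1 = m := rfl
      rw [hm, div_mul_eq_mul_div]
      exact (div_le_div_iff_of_pos_right hMpow).mpr hprod
    exact le_trans step4 (le_trans step2 step3)
  have h1α : 0 ≤ 1 - α := by
    have h1 : ∑ b, ((P ^ r) i b - α * pf b) = 1 - α := by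
      rw [Finset.sum_sub_distrib, LapWalkAux.pow_row_sum P hProw r i, ← Finset.mul_sum,
        hpfsum, mul_one]
    have h2 : (0:ℝ) ≤ ∑ b, ((P ^ r) i b - α * pf b) :=
      Finset.sum_nonneg fun b _ => sub_nonneg.mpr (hminor i b)
    linarith
  -- contraction
  have hcontr : ∀ g : Fin n → ℝ, (∑ x, g x = 0) →
      ∑ j, |∑ x, g x * (P ^ r) x j| ≤ (1 - α) * ∑ x, |g x| := by
    intro g hg
    have key : ∀ j, |∑ x, g x * (P ^ r) x j|
        ≤ ∑ x, |g x| * ((P ^ r) x j - α * pf j) := by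
      intro j
      have heq : ∑ x, g x * (P ^ r) x j = ∑ x, g x * ((P ^ r) x j - α * pf j) := by
        simp_rw [mul_sub]
        rw [Finset.sum_sub_distrib, ← Finset.sum_mul, hg, zero_mul, sub_zero]
      rw [heq]
      refine (Finset.abs_sum_le_sum_abs _ _).trans ?_
      apply Finset.sum_le_sum
      intro x _
      rw [abs_mul, abs_of_nonneg (sub_nonneg.mpr (hminor x j))]
    calc ∑ j, |∑ x, g x * (P ^ r) x j|
        ≤ ∑ j, ∑ x, |g x| * ((P ^ r) x j - α * pf j) := Finset.sum_le_sum fun j _ => key j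
      _ = ∑ x, |g x| * ∑ j, ((P ^ r) x j - α * pf j) := by
          rw [Finset.sum_comm]
          apply Finset.sum_congr rfl
          intro x _
          rw [Finset.mul_sum]
      _ = ∑ x, |g x| * (1 - α) := by
          apply Finset.sum_congr rfl
          intro x _
          rw [Finset.sum_sub_distrib, LapWalkAux.pow_row_sum P hProw r x, ← Finset.mul_sum,
            hpfsum, mul_one]
      _ = (1 - α) * ∑ x, |g x| := by rw [← Finset.sum_mul, mul_comm]
  -- main induction
  have main : ∀ s : ℕ, ∑ j, |(P ^ s) i j - pf j| ≤ 2 * (1 - α) ^ (s / r) := by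
    intro s
    induction s using Nat.strong_induction_on with
    | _ s ih =>
      by_cases hs : s < r
      · rw [Nat.div_eq_of_lt hs, pow_zero, mul_one]
        calc ∑ j, |(P ^ s) i j - pf j|
            ≤ ∑ j, ((P ^ s) i j + pf j) := by
              apply Finset.sum_le_sum
              intro j _
              have h1 := LapWalkAux.pow_nonneg_entries P hP_nonneg s i j
              have h2 := (hpf_pos j).le
              rw [abs_sub_le_iff]
              constructor <;> linarith
          _ = 2 := by
              rw [Finset.sum_add_distrib, LapWalkAux.pow_row_sum P hProw s i, hpfsum]
              norm_num
      · push_neg at hs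
        have hr0 : 0 < r := hr1
        have hdiv : s / r = (s - r) / r + 1 := Nat.div_eq_sub_div hr0 hs
        have hsplit : (P : Matrix (Fin n) (Fin n) ℝ) ^ s = P ^ (s - r) * P ^ r := by
          rw [← pow_add]
          congr 1
          omega
        set g : Fin n → ℝ := fun x => (P ^ (s - r)) i x - pf x with hg_def
        have hgsum : ∑ x, g x = 0 := by
          rw [hg_def]
          simp only []
          rw [Finset.sum_sub_distrib, LapWalkAux.pow_row_sum P hProw (s - r) i, hpfsum,
            sub_self]
        have hkeyeq : ∀ j, (P ^ s) i j - pf j = ∑ x, g x * (P ^ r) x j := by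
          intro j
          rw [hsplit, Matrix.mul_apply]
          have hstat' := LapWalkAux.pow_stationary P pf hstat r j
          rw [hg_def]
          simp only []
          rw [← hstat']
          rw [← Finset.sum_sub_distrib]
          apply Finset.sum_congr rfl
          intro x _
          ring
        have hrec : ∑ j, |(P ^ s) i j - pf j| ≤ (1 - α) * ∑ x, |g x| := by
          simp_rw [hkeyeq]
          exact hcontr g hgsum
        have hihs : ∑ x, |g x| ≤ 2 * (1 - α) ^ ((s - r) / r) := ih (s - r) (by omega)
        calc ∑ j, |(P ^ s) i j - pf j|
            ≤ (1 - α) * ∑ x, |g x| := hrec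
          _ ≤ (1 - α) * (2 * (1 - α) ^ ((s - r) / r)) := by
              apply mul_le_mul_of_nonneg_left hihs h1α
          _ = 2 * (1 - α) ^ (s / r) := by
              rw [hdiv, pow_succ]
              ring
  have := main t
  calc (1 / 2 : ℝ) * ∑ j, |(P ^ t) i j - pf j|
      ≤ (1 / 2) * (2 * (1 - α) ^ (t / r)) := by linarith
    _ = (1 - α) ^ (t / r) := by ring
end

section
/- (Expected hitting time of the Laplacian walk, k-smooth case.) Suppose f is k-smooth and strictly positive at every vertex. For the Markov chain with the Laplacian-walk Metropolis–Hastings transition matrix P started at any vertex i, the hitting time T_hit = inf{t ≥ 0 : f(X_t) = max_l f_l} of the function maximum satisfies E_i[T_hit] ≤ (k ‖f‖₂²)^r / (f_max² f_min^{2(r−1)}), where f_max = max_l f_l and f_min = min_l f_l. -/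
open scoped ENNReal in
open scoped Classical in
/-- For a Markov chain on a finite state space `V` with one-step transition matrix `P`
started at `i`, the probability (under the canonical path-space law `ℙ_i`) that the
hitting time `T_A = inf{t ≥ 0 : X_t ∈ A}` exceeds `t`, i.e. the probability that the
first `t + 1` states of the chain all avoid `A`:
`ℙ_i[T_A > t] = ∑_{v_0 = i, v_0,…,v_t ∉ A} ∏_{l<t} P(v_l, v_{l+1})`. -/
noncomputable def survivalProb {V : Type*} [Fintype V] [DecidableEq V]
    (P : Matrix V V ℝ) (A : Set V) (i : V) (t : ℕ) : ℝ :=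
  ∑ v ∈ Finset.univ.filter
      (fun v : Fin (t + 1) → V => v 0 = i ∧ ∀ l : Fin (t + 1), v l ∉ A),
    ∏ l : Fin t, P (v l.castSucc) (v l.succ)

/-- The expected hitting time `E_i[T_A]` of the set `A` for the Markov chain with
transition matrix `P` started at `i`, computed (in `ℝ≥0∞`) via the layer-cake formula
`E_i[T_A] = ∑_{t ≥ 0} ℙ_i[T_A > t]` for the `ℕ`-valued random variable `T_A`. -/
noncomputable def expectedHittingTime {V : Type*} [Fintype V] [DecidableEq V]
    (P : Matrix V V ℝ) (A : Set V) (i : V) : ENNReal :=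
  ∑' t : ℕ, ENNReal.ofReal (survivalProb P A i t)

open Finset
open scoped Classical

variable {V : Type*} [Fintype V] [DecidableEq V]

lemma survival_mem (P : Matrix V V ℝ) (A : Set V) {u : V} (hu : u ∈ A) (t : ℕ) :
    survivalProb P A u t = 0 := by
  unfold survivalProb
  apply Finset.sum_eq_zero
  intro v hv
  simp only [mem_filter] at hv
  exact absurd (hv.2.1 ▸ hv.2.2 0) (by simp [hv.2.1, hu])

lemma survival_zero (P : Matrix V V ℝ) (A : Set V) {u : V} (hu : u ∉ A) :
    survivalProb P A u 0 = 1 := by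
  unfold survivalProb
  rw [Finset.sum_eq_single (fun _ => u)]
  · simp
  · intro v hv hne
    exfalso
    simp only [mem_filter] at hv
    apply hne
    funext l
    have hl : l = 0 := by omega
    rw [hl, hv.2.1]
  · intro h
    exfalso
    apply h
    simp only [mem_filter, mem_univ, true_and]
    exact fun l => hu
lemma survival_succ (P : Matrix V V ℝ) (A : Set V) {u : V} (hu : u ∉ A) (t : ℕ) :
    survivalProb P A u (t + 1) = ∑ j, P u j * survivalProb P A j t := by
  have hR : ∑ j, P u j * survivalProb P A j t =
      ∑ w : Fin (t + 1) → V, if (∀ l : Fin (t + 1), w l ∉ A) then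
        P u (w 0) * ∏ l : Fin t, P (w l.castSucc) (w l.succ) else 0 := by
    unfold survivalProb
    simp_rw [Finset.sum_filter, Finset.mul_sum, mul_ite, mul_zero]
    rw [Finset.sum_comm]
    refine Finset.sum_congr rfl fun w _ => ?_
    rw [Finset.sum_eq_single (w 0)]
    · by_cases hw : ∀ l : Fin (t + 1), w l ∉ A
      · rw [if_pos ⟨rfl, hw⟩, if_pos hw]
      · rw [if_neg (by tauto), if_neg hw]
    · intro j _ hj
      rw [if_neg]
      rintro ⟨h1, -⟩
      exact hj h1.symm
    · intro h
      exact absurd (Finset.mem_univ _) h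
  rw [hR]
  unfold survivalProb
  rw [Finset.sum_filter, ← Equiv.sum_comp (Fin.consEquiv fun _ : Fin (t + 1 + 1) => V),
    Fintype.sum_prod_type]
  rw [Finset.sum_eq_single u]
  · refine Finset.sum_congr rfl fun w _ => ?_
    have hprod : (∏ l : Fin (t + 1),
        P ((Fin.cons u w : Fin (t + 1 + 1) → V) l.castSucc)
          ((Fin.cons u w : Fin (t + 1 + 1) → V) l.succ)) =
        P u (w 0) * ∏ l : Fin t, P (w l.castSucc) (w l.succ) := by
      simp only [Fin.prod_univ_succ, Fin.castSucc_zero, Fin.cons_zero,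
        ← Fin.succ_castSucc, Fin.cons_succ]
    by_cases hw : ∀ l : Fin (t + 1), w l ∉ A
    · rw [if_pos, if_pos hw]
      · simp only [Fin.consEquiv_apply]
        exact hprod
      · constructor
        · simp [Fin.consEquiv]
        · simp only [Fin.consEquiv_apply, Fin.forall_fin_succ, Fin.cons_zero, Fin.cons_succ]
          exact ⟨hu, Fin.forall_fin_succ.mp hw⟩
    · rw [if_neg, if_neg hw]
      simp only [Fin.consEquiv_apply, Fin.forall_fin_succ, Fin.cons_zero, Fin.cons_succ]
      rintro ⟨-, -, h0, hs⟩
      exact hw (Fin.forall_fin_succ.mpr ⟨h0, hs⟩)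
  · intro x _ hxu
    apply Finset.sum_eq_zero
    intro w _
    rw [if_neg]
    simp only [Fin.consEquiv_apply, Fin.cons_zero]
    tauto
  · intro h
    exact absurd (Finset.mem_univ _) h

lemma survival_nonneg (P : Matrix V V ℝ) (A : Set V) (hP0 : ∀ i j, 0 ≤ P i j) :
    ∀ (t : ℕ) (u : V), 0 ≤ survivalProb P A u t := by
  intro t
  induction t with
  | zero =>
    intro u
    by_cases hu : u ∈ A
    · rw [survival_mem P A hu]
    · rw [survival_zero P A hu]; norm_num
  | succ t ih =>
    intro u
    by_cases hu : u ∈ A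
    · rw [survival_mem P A hu]
    · rw [survival_succ P A hu]
      exact Finset.sum_nonneg fun j _ => mul_nonneg (hP0 u j) (ih j)

lemma survival_le_one (P : Matrix V V ℝ) (A : Set V) (hP0 : ∀ i j, 0 ≤ P i j)
    (hPsum : ∀ i, ∑ j, P i j = 1) :
    ∀ (t : ℕ) (u : V), survivalProb P A u t ≤ 1 := by
  intro t
  induction t with
  | zero =>
    intro u
    by_cases hu : u ∈ A
    · rw [survival_mem P A hu]; norm_num
    · rw [survival_zero P A hu]
  | succ t ih =>
    intro u
    by_cases hu : u ∈ A
    · rw [survival_mem P A hu]; norm_num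
    · rw [survival_succ P A hu]
      calc ∑ j, P u j * survivalProb P A j t ≤ ∑ j, P u j * 1 :=
            Finset.sum_le_sum fun j _ => mul_le_mul_of_nonneg_left (ih j) (hP0 u j)
        _ = 1 := by simp [hPsum u]

lemma hsum_succ (P : Matrix V V ℝ) (A : Set V) {u : V} (hu : u ∉ A) (N : ℕ) :
    ∑ t ∈ range (N + 1), survivalProb P A u t =
      1 + ∑ j, P u j * ∑ t ∈ range N, survivalProb P A j t := by
  rw [Finset.sum_range_succ']
  rw [survival_zero P A hu]
  simp_rw [survival_succ P A hu]
  rw [Finset.sum_comm]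
  simp_rw [Finset.mul_sum]
  ring

lemma geom_aux : ∀ (ρ : ℝ), 2 ≤ ρ → ∀ (r : ℕ),
    ∑ j ∈ range r, (ρ - 1) ^ (j + 1) ≤ ρ ^ r - 1 := by
  intro ρ hρ r
  induction r with
  | zero => simp
  | succ r ih =>
    rw [Finset.sum_range_succ']
    have h1 : (1 : ℝ) ≤ ρ ^ r := one_le_pow₀ (by linarith)
    calc ∑ j ∈ range r, (ρ - 1) ^ (j + 1 + 1) + (ρ - 1) ^ (0 + 1)
        = (ρ - 1) * (∑ j ∈ range r, (ρ - 1) ^ (j + 1) + 1) := by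
          rw [mul_add, Finset.mul_sum]
          ring_nf
      _ ≤ (ρ - 1) * (ρ ^ r - 1 + 1) := by
          apply mul_le_mul_of_nonneg_left _ (by linarith)
          linarith
      _ = ρ ^ (r + 1) - ρ ^ r := by ring
      _ ≤ ρ ^ (r + 1) - 1 := by linarith

lemma master (P : Matrix V V ℝ) (A : Set V)
    (hP0 : ∀ i j, 0 ≤ P i j) (hPsum : ∀ i, ∑ j, P i j = 1)
    (r : ℕ) (hr : 1 ≤ r) (a b B : ℝ) (ha : 0 < a) (hb : 0 < b)
    (hBr : (r : ℝ) ≤ B)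
    (hB2 : (∑ j ∈ range r, (1 / b) ^ j) * (1 / a) ≤ B)
    (hpath : ∀ u, u ∉ A → ∃ (τ : ℕ) (p : ℕ → V), 1 ≤ τ ∧ τ ≤ r ∧ p 0 = u ∧ p τ ∈ A ∧
      (∀ l, l < τ → p l ∉ A) ∧ (∀ l, l + 1 < τ → b ≤ P (p l) (p (l + 1))) ∧
      a ≤ P (p (τ - 1)) (p τ)) :
    ∀ T u, ∑ t ∈ range T, survivalProb P A u t ≤ B := by
  have hr0 : (0 : ℝ) ≤ (r : ℕ) := Nat.cast_nonneg r
  have hB0 : (0 : ℝ) ≤ B := le_trans hr0 hBr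
  intro T
  induction T using Nat.strong_induction_on with
  | _ T IH =>
  intro u
  by_cases hu : u ∈ A
  · have : ∀ t, survivalProb P A u t = 0 := fun t => survival_mem P A hu t
    simp [this, hB0]
  by_cases hT : T ≤ r
  · calc ∑ t ∈ range T, survivalProb P A u t ≤ ∑ t ∈ range T, 1 :=
        Finset.sum_le_sum fun t _ => survival_le_one P A hP0 hPsum t u
      _ = (T : ℝ) := by simp
      _ ≤ (r : ℝ) := by exact_mod_cast hT
      _ ≤ B := hBr
  push_neg at hT
  obtain ⟨τ, p, hτ1, hτr, hp0, hpτ, hpnot, hpb, hpa⟩ := hpath u hu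
  set K : ℕ → ℝ := fun m => (∑ j ∈ range m, (1 / b) ^ j) * (1 / a) with hK
  set G : ℕ → ℝ := fun l => ∏ x ∈ Finset.Ico l τ, P (p x) (p (x + 1)) with hG
  have hGnonneg : ∀ l, 0 ≤ G l := fun l => Finset.prod_nonneg fun x _ => hP0 _ _
  have hGsplit : ∀ l, l < τ → G l = P (p l) (p (l + 1)) * G (l + 1) := fun l hl =>
    Finset.prod_eq_prod_Ico_succ_bot hl _
  have hGlb : ∀ m l, l + m + 1 = τ → a * b ^ m ≤ G l := by
    intro m
    induction m with
    | zero =>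
      intro l hl
      have hIco : Finset.Ico l τ = {l} := by
        rw [show τ = l + 1 by omega]
        exact Nat.Ico_succ_singleton l
      have hGl : G l = P (p l) (p (l + 1)) := by
        show ∏ x ∈ Finset.Ico l τ, P (p x) (p (x + 1)) = P (p l) (p (l + 1))
        rw [hIco, Finset.prod_singleton]
      rw [hGl, pow_zero, mul_one]
      rw [show l = τ - 1 by omega, show τ - 1 + 1 = τ by omega]
      exact hpa
    | succ m ihm =>
      intro l hl
      have hlt : l < τ := by omega
      rw [hGsplit l hlt]
      have h1 : b ≤ P (p l) (p (l + 1)) := hpb l (by omega)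
      have h2 : a * b ^ m ≤ G (l + 1) := ihm (l + 1) (by omega)
      calc a * b ^ (m + 1) = b * (a * b ^ m) := by ring
        _ ≤ P (p l) (p (l + 1)) * G (l + 1) :=
          mul_le_mul h1 h2 (by positivity) (le_trans hb.le h1)
  have inner : ∀ m l N, m ≤ τ → l + m = τ → m ≤ N → N ≤ T →
      ∑ t ∈ range N, survivalProb P A (p l) t ≤ B - (B - K m) * G l := by
    intro m
    induction m with
    | zero =>
      intro l N _ hl _ _
      have hlτ : l = τ := by omega
      subst hlτ
      have hz : ∀ t, survivalProb P A (p l) t = 0 :=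
        fun t => survival_mem P A hpτ t
      simp [hz, hK, hG, Finset.Ico_self]
    | succ m ihm =>
      intro l N hm hl hN1 hN2
      obtain ⟨N', rfl⟩ : ∃ N', N = N' + 1 := ⟨N - 1, by omega⟩
      have hlτ : l < τ := by omega
      have hlA : p l ∉ A := hpnot l hlτ
      rw [hsum_succ P A hlA N']
      have hπ0 : 0 ≤ P (p l) (p (l + 1)) := hP0 _ _
      have hsplit : ∑ j, P (p l) j * ∑ t ∈ range N', survivalProb P A j t
          = P (p l) (p (l + 1)) * (∑ t ∈ range N', survivalProb P A (p (l + 1)) t)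
            + ∑ j ∈ univ.erase (p (l + 1)),
                P (p l) j * ∑ t ∈ range N', survivalProb P A j t := by
        rw [← Finset.add_sum_erase _ _ (mem_univ (p (l + 1)))]
      have hrest : ∑ j ∈ univ.erase (p (l + 1)),
            P (p l) j * ∑ t ∈ range N', survivalProb P A j t
          ≤ (1 - P (p l) (p (l + 1))) * B := by
        calc ∑ j ∈ univ.erase (p (l + 1)),
              P (p l) j * ∑ t ∈ range N', survivalProb P A j t
            ≤ ∑ j ∈ univ.erase (p (l + 1)), P (p l) j * B := by
              refine Finset.sum_le_sum fun j _ => ?_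
              refine mul_le_mul_of_nonneg_left ?_ (hP0 _ _)
              by_cases hj : j ∈ A
              · have : ∀ t, survivalProb P A j t = 0 := fun t => survival_mem P A hj t
                simp [this, hB0]
              · exact IH N' (by omega) j
          _ = (∑ j ∈ univ.erase (p (l + 1)), P (p l) j) * B := by rw [Finset.sum_mul]
          _ = (1 - P (p l) (p (l + 1))) * B := by
              rw [Finset.sum_erase_eq_sub (mem_univ _), hPsum]
      rcases Nat.eq_zero_or_pos m with hm0 | hmpos
      · -- m = 0 : next vertex is in A
        subst hm0
        have hl1 : l + 1 = τ := by omega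
        have hz : ∀ t, survivalProb P A (p (l + 1)) t = 0 :=
          fun t => survival_mem P A (by rw [hl1]; exact hpτ) t
        have hzz : ∑ t ∈ range N', survivalProb P A (p (l + 1)) t = 0 := by simp [hz]
        have hGl : G l = P (p l) (p (l + 1)) := by
          show ∏ x ∈ Finset.Ico l τ, P (p x) (p (x + 1)) = P (p l) (p (l + 1))
          rw [show Finset.Ico l τ = {l} by rw [← hl1]; exact Nat.Ico_succ_singleton l,
            Finset.prod_singleton]
        have hπa : a ≤ P (p l) (p (l + 1)) := by
          rw [show l = τ - 1 by omega, show τ - 1 + 1 = τ by omega]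
          exact hpa
        have hK1 : K 1 = 1 / a := by simp [hK]
        have h1a : 1 ≤ P (p l) (p (l + 1)) * (1 / a) := by
          rw [mul_one_div, le_div_iff₀ ha, one_mul]
          exact hπa
        rw [hsplit, hzz, hGl, hK1]
        nlinarith [h1a, hπ0, hB0]
      · -- m ≥ 1
        have hl1A : p (l + 1) ∉ A := hpnot (l + 1) (by omega)
        have hmain : ∑ t ∈ range N', survivalProb P A (p (l + 1)) t
            ≤ B - (B - K m) * G (l + 1) :=
          ihm (l + 1) N' (by omega) (by omega) (by omega) (by omega)
        have hGl : G l = P (p l) (p (l + 1)) * G (l + 1) := hGsplit l hlτ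
        have hKs : K (m + 1) = K m + (1 / b) ^ m * (1 / a) := by
          rw [hK]
          simp only [Finset.sum_range_succ, add_mul]
        have hglb : a * b ^ m ≤ G l := hGlb m l (by omega)
        have h1 : 1 ≤ (1 / b) ^ m * (1 / a) * G l := by
          have heq : (1 / b) ^ m * (1 / a) * (a * b ^ m) = 1 := by
            rw [one_div_pow, div_mul_div_comm, one_mul, div_mul_eq_mul_div, one_mul,
              div_eq_one_iff_eq (by positivity), mul_comm]
          calc (1 : ℝ) = (1 / b) ^ m * (1 / a) * (a * b ^ m) := heq.symm
            _ ≤ (1 / b) ^ m * (1 / a) * G l := by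
              apply mul_le_mul_of_nonneg_left hglb
              positivity
        have hstep : P (p l) (p (l + 1)) * (∑ t ∈ range N', survivalProb P A (p (l + 1)) t)
            ≤ P (p l) (p (l + 1)) * (B - (B - K m) * G (l + 1)) :=
          mul_le_mul_of_nonneg_left hmain hπ0
        rw [hGl] at h1
        rw [hsplit, hKs, hGl]
        nlinarith [h1, hstep, hrest]
  have hfin := inner τ 0 T (le_refl τ) (by omega) (by omega) (le_refl T)
  rw [hp0] at hfin
  have hKτ : K τ ≤ B := by
    refine le_trans ?_ hB2
    rw [hK]
    apply mul_le_mul_of_nonneg_right _ (by positivity)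
    apply Finset.sum_le_sum_of_subset_of_nonneg (Finset.range_subset_range.mpr hτr)
    intro j _ _
    positivity
  have : 0 ≤ (B - K τ) * G 0 := mul_nonneg (by linarith) (hGnonneg 0)
  linarith

lemma expected_le (P : Matrix V V ℝ) (A : Set V) (i : V) (B : ℝ)
    (hnn : ∀ t, 0 ≤ survivalProb P A i t)
    (hS : ∀ T, ∑ t ∈ range T, survivalProb P A i t ≤ B) :
    expectedHittingTime P A i ≤ ENNReal.ofReal B := by
  rw [expectedHittingTime, ENNReal.tsum_eq_iSup_sum]
  refine iSup_le fun s => ?_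
  obtain ⟨N, hN⟩ := Finset.exists_nat_subset_range s
  calc ∑ t ∈ s, ENNReal.ofReal (survivalProb P A i t)
      ≤ ∑ t ∈ range N, ENNReal.ofReal (survivalProb P A i t) :=
        Finset.sum_le_sum_of_subset hN
    _ = ENNReal.ofReal (∑ t ∈ range N, survivalProb P A i t) :=
        (ENNReal.ofReal_sum_of_nonneg fun t _ => hnn t).symm
    _ ≤ ENNReal.ofReal B := ENNReal.ofReal_le_ofReal (hS N)

set_option maxHeartbeats 2000000 in
/-- Expected hitting time of the Laplacian walk, `k`-smooth case:
suppose `f` is `k`-smooth and strictly positive at every vertex.  For the Markov chain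
with the Laplacian-walk Metropolis–Hastings transition matrix `P` started at any vertex
`i`, the hitting time `T_hit = inf{t ≥ 0 : f(X_t) = max_l f l}` of the function maximum
satisfies `E_i[T_hit] ≤ (k ‖f‖₂²)^r / (f_max² f_min^{2(r−1)})`. -/
theorem laplacian_walk_expected_hitting_time_ksmooth
    {n : ℕ} (hn : 2 ≤ n)
    (W : Matrix (Fin n) (Fin n) ℝ)
    (hWsymm : ∀ i j, W i j = W j i)
    (hW01 : ∀ i j, W i j = 0 ∨ W i j = 1)
    (hWdiag : ∀ i, W i i = 0)
    (hdegpos : ∀ i, 0 < ∑ j, W i j)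
    (r : ℕ) (hr1 : 1 ≤ r)
    (hWconn : ∀ i j : Fin n, ∃ v : Fin (r + 1) → Fin n,
      v 0 = i ∧ v (Fin.last r) = j ∧ ∀ l : Fin r, W (v l.castSucc) (v l.succ) = 1)
    {k : ℕ} (hk1 : 1 ≤ k) (hkn : k ≤ n)
    (Uk : Matrix (Fin n) (Fin k) ℝ)
    (hU : Uk.transpose * Uk = 1)
    (f : Fin n → ℝ) (α : Fin k → ℝ) (hf : f = Uk.mulVec α) (hfpos : ∀ i, 0 < f i)
    (pf : Fin n → ℝ) (hpf : ∀ i, pf i = f i ^ 2 / ∑ j, f j ^ 2)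
    (Q' : Matrix (Fin n) (Fin n) ℝ)
    (hQ' : ∀ i j, Q' i j =
      W i j * (localCoherence Uk j) ^ 2 / ∑ l, W i l * (localCoherence Uk l) ^ 2)
    (P : Matrix (Fin n) (Fin n) ℝ)
    (hP1 : ∀ i j, j ≠ i → W i j = 1 →
      P i j = Q' i j * min 1 ((pf j * Q' j i) / (pf i * Q' i j)))
    (hP0 : ∀ i j, j ≠ i → W i j = 0 → P i j = 0)
    (hPdiag : ∀ i, P i i = 1 - ∑ j ∈ Finset.univ.erase i, P i j)
    (fmax fmin : ℝ)
    (hfmax : IsGreatest (Set.range f) fmax) (hfmin : IsLeast (Set.range f) fmin)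
    (i : Fin n) :
    expectedHittingTime P {j | f j = fmax} i ≤
      ENNReal.ofReal (((k : ℝ) * ∑ j, f j ^ 2) ^ r / (fmax ^ 2 * fmin ^ (2 * (r - 1)))) := by
  classical
  obtain ⟨iM, hiM⟩ := hfmax.1
  obtain ⟨i0, hi0⟩ := hfmin.1
  have hfle : ∀ j, f j ≤ fmax := fun j => hfmax.2 ⟨j, rfl⟩
  have hfge : ∀ j, fmin ≤ f j := fun j => hfmin.2 ⟨j, rfl⟩
  have hfmaxpos : 0 < fmax := hiM ▸ hfpos iM
  have hfminpos : 0 < fmin := hi0 ▸ hfpos i0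
  set F : ℝ := ∑ j, f j ^ 2 with hF
  have hFpos : 0 < F := by
    rw [hF]
    exact Finset.sum_pos (fun j _ => pow_pos (hfpos j) 2) ⟨i, mem_univ i⟩
  have hFmax : fmax ^ 2 ≤ F := by
    rw [hF, ← hiM]
    exact Finset.single_le_sum (fun j _ => sq_nonneg (f j)) (mem_univ iM)
  have hFmin : (n : ℝ) * fmin ^ 2 ≤ F := by
    rw [hF]
    calc (n : ℝ) * fmin ^ 2 = ∑ _j : Fin n, fmin ^ 2 := by
          simp [Finset.sum_const, mul_comm]
      _ ≤ ∑ j, f j ^ 2 :=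
          Finset.sum_le_sum fun j _ => pow_le_pow_left₀ hfminpos.le (hfge j) 2
  have hn2 : (2 : ℝ) ≤ (n : ℝ) := by exact_mod_cast hn
  have hk1' : (1 : ℝ) ≤ (k : ℝ) := by exact_mod_cast hk1
  -- coherence facts
  set c : Fin n → ℝ := fun j => (localCoherence Uk j) ^ 2 with hc
  have hcoh : ∀ j, c j = ∑ l, (Uk j l) ^ 2 := by
    intro j
    rw [hc]
    show (localCoherence Uk j) ^ 2 = _
    rw [localCoherence, Real.sq_sqrt (Finset.sum_nonneg fun l _ => sq_nonneg _)]
    rw [Matrix.mulVec_single]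
    refine Finset.sum_congr rfl fun l _ => ?_
    simp [Matrix.transpose_apply]
  have hUortho : ∀ l m, ∑ j, Uk j l * Uk j m = if l = m then (1 : ℝ) else 0 := by
    intro l m
    have h := congrFun (congrFun hU l) m
    simpa [Matrix.mul_apply, Matrix.transpose_apply, Matrix.one_apply] using h
  have hsumc : ∑ j, c j = (k : ℝ) := by
    simp_rw [hcoh]
    rw [Finset.sum_comm]
    have : ∀ l : Fin k, ∑ j, (Uk j l) ^ 2 = 1 := by
      intro l
      have := hUortho l l
      simpa [pow_two] using this
    simp [this]
  have hFα : F = ∑ l, (α l) ^ 2 := by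
    rw [hF, hf]
    have hexp : ∀ j : Fin n, (Uk.mulVec α j) ^ 2
        = ∑ l, ∑ m, Uk j l * Uk j m * (α l * α m) := by
      intro j
      show (∑ l, Uk j l * α l) ^ 2 = _
      rw [sq, Finset.sum_mul_sum]
      exact Finset.sum_congr rfl fun l _ => Finset.sum_congr rfl fun m _ => by ring
    rw [Finset.sum_congr rfl fun j _ => hexp j, Finset.sum_comm]
    refine Finset.sum_congr rfl fun l _ => ?_
    rw [Finset.sum_comm]
    have hswap : ∀ m, ∑ j, Uk j l * Uk j m * (α l * α m)
        = (if l = m then (1:ℝ) else 0) * (α l * α m) := by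
      intro m
      rw [← Finset.sum_mul, hUortho]
    rw [Finset.sum_congr rfl fun m _ => hswap m]
    simp [ite_mul, pow_two]
  have hCS : ∀ j, f j ^ 2 ≤ c j * F := by
    intro j
    rw [hcoh j, hFα, hf]
    have h := Finset.sum_mul_sq_le_sq_mul_sq Finset.univ (fun l => Uk j l) (fun l => α l)
    show (∑ l, Uk j l * α l) ^ 2 ≤ _
    exact h
  -- derived quantities
  set γ : ℝ := fmin ^ 2 / F with hγ
  set k' : ℝ := (k : ℝ) - γ with hk'
  have hγpos : 0 < γ := div_pos (pow_pos hfminpos 2) hFpos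
  have hγle : γ ≤ 1 / 2 := by
    rw [hγ, div_le_iff₀ hFpos]
    nlinarith [hFmin, pow_pos hfminpos 2]
  have hk'pos : 0 < k' := by rw [hk']; linarith
  have hclb : ∀ j, f j ^ 2 / F ≤ c j := fun j => (div_le_iff₀ hFpos).mpr (by
    have := hCS j; linarith)
  have hcγ : ∀ j, γ ≤ c j := fun j => le_trans
    ((div_le_div_iff_of_pos_right hFpos).mpr (pow_le_pow_left₀ hfminpos.le (hfge j) 2)) (hclb j)
  have hcpos : ∀ j, 0 < c j := fun j => lt_of_lt_of_le hγpos (hcγ j)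
  set D : Fin n → ℝ := fun v => ∑ l, W v l * c l with hD
  have hW0 : ∀ a b, 0 ≤ W a b := by
    intro a b
    rcases hW01 a b with h | h <;> rw [h] <;> norm_num
  have hW1 : ∀ a b, W a b ≤ 1 := by
    intro a b
    rcases hW01 a b with h | h <;> rw [h] <;> norm_num
  have hDpos : ∀ v, 0 < D v := by
    intro v
    have h1 : γ * ∑ l, W v l ≤ ∑ l, W v l * c l := by
      rw [Finset.mul_sum]
      refine Finset.sum_le_sum fun l _ => ?_
      rw [mul_comm γ (W v l)]
      exact mul_le_mul_of_nonneg_left (hcγ l) (hW0 v l)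
    have h2 : 0 < γ * ∑ l, W v l := mul_pos hγpos (hdegpos v)
    exact lt_of_lt_of_le h2 h1
  have hDle : ∀ v, D v ≤ k' := by
    intro v
    have h1 : D v ≤ ∑ l ∈ univ.erase v, c l := by
      show ∑ l, W v l * c l ≤ _
      rw [← Finset.add_sum_erase _ (fun l => W v l * c l) (mem_univ v), hWdiag, zero_mul,
        zero_add]
      refine Finset.sum_le_sum fun l _ => ?_
      exact mul_le_of_le_one_left (hcpos l).le (hW1 v l)
    have h2 : ∑ l ∈ univ.erase v, c l = (k : ℝ) - c v := by
      rw [Finset.sum_erase_eq_sub (mem_univ v), hsumc]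
    rw [h2] at h1
    have := hcγ v
    rw [hk']
    linarith
  -- Q' facts
  have hQform : ∀ a b, Q' a b = W a b * c b / D a := by
    intro a b
    rw [hQ' a b]
  have hQnonneg : ∀ a b, 0 ≤ Q' a b := fun a b => by
    rw [hQform]
    exact div_nonneg (mul_nonneg (hW0 a b) (hcpos b).le) (hDpos a).le
  have hQedge : ∀ a b, W a b = 1 → Q' a b = c b / D a := by
    intro a b hw
    rw [hQform, hw, one_mul]
  have hQdiag : ∀ a, Q' a a = 0 := by
    intro a
    rw [hQform, hWdiag, zero_mul, zero_div]
  have hQrow : ∀ a, ∑ b, Q' a b = 1 := by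
    intro a
    simp_rw [hQform]
    rw [← Finset.sum_div]
    exact div_self (hDpos a).ne'
  clear_value c D
  have hpfpos : ∀ v, 0 < pf v := fun v => by
    rw [hpf v]
    exact div_pos (pow_pos (hfpos v) 2) hFpos
  clear_value F γ k'
  -- P facts
  have hPnonneg : ∀ a b, 0 ≤ P a b := by
    have hPQ : ∀ a b, b ≠ a → P a b ≤ Q' a b := by
      intro a b hba
      rcases hW01 a b with hw | hw
      · rw [hP0 a b hba hw]
        exact hQnonneg a b
      · rw [hP1 a b hba hw]
        calc Q' a b * min 1 (pf b * Q' b a / (pf a * Q' a b))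
            ≤ Q' a b * 1 := mul_le_mul_of_nonneg_left (min_le_left _ _) (hQnonneg a b)
          _ = Q' a b := mul_one _
    intro a b
    by_cases hab : b = a
    · subst hab
      rw [hPdiag]
      have hle : ∑ j ∈ univ.erase b, P b j ≤ 1 := by
        calc ∑ j ∈ univ.erase b, P b j ≤ ∑ j ∈ univ.erase b, Q' b j :=
              Finset.sum_le_sum fun j hj => hPQ b j (Finset.ne_of_mem_erase hj)
          _ = 1 - Q' b b := by rw [Finset.sum_erase_eq_sub (mem_univ b), hQrow]
          _ ≤ 1 := by rw [hQdiag]; norm_num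
      linarith
    · rcases hW01 a b with hw | hw
      · rw [hP0 a b hab hw]
      · rw [hP1 a b hab hw]
        have hX : 0 ≤ pf b * Q' b a / (pf a * Q' a b) :=
          div_nonneg (mul_nonneg (hpfpos b).le (hQnonneg b a))
            (mul_nonneg (hpfpos a).le (hQnonneg a b))
        exact mul_nonneg (hQnonneg a b) (le_min zero_le_one hX)
  have hProw : ∀ a, ∑ b, P a b = 1 := by
    intro a
    rw [← Finset.add_sum_erase _ _ (mem_univ a), hPdiag a]
    ring
  -- edge lower bound
  have hedge : ∀ a b, W a b = 1 → f b ^ 2 / (k' * F) ≤ P a b := by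
    intro a b hw
    have hba : b ≠ a := by
      intro h
      rw [h, hWdiag] at hw
      norm_num at hw
    have hQab : Q' a b = c b / D a := hQedge a b hw
    have hQba : Q' b a = c a / D b := hQedge b a ((hWsymm b a).trans hw)
    have hQabpos : 0 < Q' a b := by
      rw [hQab]
      exact div_pos (hcpos b) (hDpos a)
    rw [hP1 a b hba hw]
    rcases le_total 1 (pf b * Q' b a / (pf a * Q' a b)) with hX | hX
    · rw [min_eq_left hX, mul_one, hQab]
      calc f b ^ 2 / (k' * F) = (f b ^ 2 / F) / k' := by rw [div_div, mul_comm]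
        _ ≤ c b / k' := (div_le_div_iff_of_pos_right hk'pos).mpr (hclb b)
        _ ≤ c b / D a := div_le_div_of_nonneg_left (hcpos b).le (hDpos a) (hDle a)
    · rw [min_eq_right hX]
      have heq : Q' a b * (pf b * Q' b a / (pf a * Q' a b)) = pf b * Q' b a / pf a := by
        field_simp [hQabpos.ne', (hpfpos a).ne']
      rw [heq, hQba, hpf a, hpf b]
      have h1 : (f a ^ 2 / F) / k' ≤ c a / D b :=
        div_le_div₀ (hcpos a).le (hclb a) (hDpos b) (hDle b)
      have hfa : 0 < f a ^ 2 / F := div_pos (pow_pos (hfpos a) 2) hFpos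
      have hfb : (0:ℝ) ≤ f b ^ 2 / F := le_of_lt (div_pos (pow_pos (hfpos b) 2) hFpos)
      rw [div_le_div_iff₀ (mul_pos hk'pos hFpos) hfa]
      have h2 : (f b ^ 2 / F) * ((f a ^ 2 / F) / k') * (k' * F) = f b ^ 2 * (f a ^ 2 / F) := by
        field_simp
      have h3 : (f b ^ 2 / F) * ((f a ^ 2 / F) / k') * (k' * F)
          ≤ (f b ^ 2 / F) * (c a / D b) * (k' * F) :=
        mul_le_mul_of_nonneg_right (mul_le_mul_of_nonneg_left h1 hfb)
          (mul_pos hk'pos hFpos).le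
      linarith
  -- constants
  set aa : ℝ := fmax ^ 2 / (k' * F) with haa
  set bb : ℝ := fmin ^ 2 / (k' * F) with hbb
  set B : ℝ := ((k : ℝ) * F) ^ r / (fmax ^ 2 * fmin ^ (2 * (r - 1))) with hB
  have haapos : 0 < aa := div_pos (pow_pos hfmaxpos 2) (mul_pos hk'pos hFpos)
  have hbbpos : 0 < bb := div_pos (pow_pos hfminpos 2) (mul_pos hk'pos hFpos)
  set ρ : ℝ := (k : ℝ) * F / fmin ^ 2 with hρ
  clear_value aa bb B
  have hρ2 : 2 ≤ ρ := by
    rw [hρ, le_div_iff₀ (pow_pos hfminpos 2)]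
    nlinarith [hFmin, hFpos]
  clear_value ρ
  have hBρ : B = ρ ^ r * fmin ^ 2 / fmax ^ 2 := by
    have h2 : fmin ^ (2 * (r - 1)) * fmin ^ 2 = (fmin ^ 2) ^ r := by
      rw [← pow_mul, ← pow_add]
      congr 1
      omega
    have hfminr : (0:ℝ) < (fmin ^ 2) ^ r := pow_pos (pow_pos hfminpos 2) r
    rw [hB, hρ, div_pow, div_mul_eq_mul_div, div_div]
    rw [div_eq_div_iff (mul_pos (pow_pos hfmaxpos 2) (pow_pos hfminpos _)).ne'
      (mul_pos hfminr (pow_pos hfmaxpos 2)).ne']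
    calc ((k:ℝ) * F) ^ r * ((fmin ^ 2) ^ r * fmax ^ 2)
        = ((k:ℝ) * F) ^ r * ((fmin ^ (2 * (r - 1)) * fmin ^ 2) * fmax ^ 2) := by rw [h2]
      _ = ((k:ℝ) * F) ^ r * fmin ^ 2 * (fmax ^ 2 * fmin ^ (2 * (r - 1))) := by ring
  have hBr : (r : ℝ) ≤ B := by
    have h2r : (r : ℝ) ≤ 2 ^ (r - 1) := by
      have h0 := Nat.lt_two_pow_self (n := r - 1)
      have h : r ≤ 2 ^ (r - 1) := by omega
      exact_mod_cast h
    have hρpow : (2:ℝ) ^ (r - 1) ≤ ρ ^ (r - 1) := pow_le_pow_left₀ (by norm_num) hρ2 _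
    have hmf : 1 ≤ (k:ℝ) * F / fmax ^ 2 := by
      rw [le_div_iff₀ (pow_pos hfmaxpos 2), one_mul]
      nlinarith [hFmax, hFpos]
    have hBform : B = ((k:ℝ) * F / fmax ^ 2) * ρ ^ (r - 1) := by
      have hsplitρ : ρ ^ r = ρ ^ (r - 1) * ρ := by
        rw [← pow_succ]
        congr 1
        omega
      have hfact : ρ * fmin ^ 2 = (k:ℝ) * F := by
        rw [hρ]
        field_simp
      rw [hBρ, hsplitρ, ← hfact]
      ring
    rw [hBform]
    calc (r:ℝ) ≤ 2 ^ (r - 1) := h2r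
      _ ≤ ρ ^ (r - 1) := hρpow
      _ = 1 * ρ ^ (r - 1) := (one_mul _).symm
      _ ≤ ((k:ℝ) * F / fmax ^ 2) * ρ ^ (r - 1) := by
          refine mul_le_mul_of_nonneg_right hmf ?_
          positivity
  have hσb : (1:ℝ) / bb = ρ - 1 := by
    rw [hbb, one_div_div, hρ, hk', hγ]
    field_simp
  have hσa : (1:ℝ) / aa = (ρ - 1) * fmin ^ 2 / fmax ^ 2 := by
    rw [haa, one_div_div, hρ, hk', hγ]
    field_simp
  have hB2 : (∑ j ∈ range r, (1 / bb) ^ j) * (1 / aa) ≤ B := by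
    rw [hσb, hσa]
    have hsum : (∑ j ∈ range r, (ρ - 1) ^ j) * ((ρ - 1) * fmin ^ 2 / fmax ^ 2)
        = (∑ j ∈ range r, (ρ - 1) ^ (j + 1)) * (fmin ^ 2 / fmax ^ 2) := by
      rw [Finset.sum_mul, Finset.sum_mul]
      refine Finset.sum_congr rfl fun j _ => ?_
      rw [pow_succ]
      ring
    rw [hsum]
    have hg := geom_aux ρ hρ2 r
    have hq : (0:ℝ) ≤ fmin ^ 2 / fmax ^ 2 := by positivity
    calc (∑ j ∈ range r, (ρ - 1) ^ (j + 1)) * (fmin ^ 2 / fmax ^ 2)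
        ≤ (ρ ^ r - 1) * (fmin ^ 2 / fmax ^ 2) := mul_le_mul_of_nonneg_right hg hq
      _ ≤ ρ ^ r * (fmin ^ 2 / fmax ^ 2) := by nlinarith [hq]
      _ = B := by rw [hBρ]; ring
  -- path hypothesis
  have hpath : ∀ u, u ∉ {j | f j = fmax} → ∃ (τ : ℕ) (p : ℕ → Fin n),
      1 ≤ τ ∧ τ ≤ r ∧ p 0 = u ∧ p τ ∈ {j | f j = fmax} ∧
      (∀ l, l < τ → p l ∉ {j | f j = fmax}) ∧
      (∀ l, l + 1 < τ → bb ≤ P (p l) (p (l + 1))) ∧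
      aa ≤ P (p (τ - 1)) (p τ) := by
    intro u hu
    obtain ⟨v, hv0, hvlast, hvedge⟩ := hWconn u iM
    set p : ℕ → Fin n := fun l => v ⟨min l r, Nat.lt_succ_of_le (min_le_right l r)⟩ with hp
    have hpl : ∀ (l : ℕ) (hl : l ≤ r), p l = v ⟨l, Nat.lt_succ_of_le hl⟩ := by
      intro l hl
      exact congrArg v (Fin.ext (min_eq_left hl))
    have hp0' : p 0 = u := by
      rw [hpl 0 (Nat.zero_le r), ← hv0]
      exact congrArg v (Fin.ext rfl)
    have hPr : p r ∈ {j | f j = fmax} := by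
      have hpr : p r = iM := by
        rw [hpl r le_rfl, ← hvlast]
        exact congrArg v (Fin.ext rfl)
      show f (p r) = fmax
      rw [hpr, hiM]
    have hexQ : ∃ l, p l ∈ {j | f j = fmax} := ⟨r, hPr⟩
    have hτspec : p (Nat.find hexQ) ∈ {j | f j = fmax} := Nat.find_spec hexQ
    have hτle : Nat.find hexQ ≤ r := Nat.find_le hPr
    have hτmin : ∀ l, l < Nat.find hexQ → p l ∉ {j | f j = fmax} :=
      fun l hl => Nat.find_min hexQ hl
    have hτpos : 1 ≤ Nat.find hexQ := by
      rcases Nat.eq_zero_or_pos (Nat.find hexQ) with h0 | h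
      · exfalso
        apply hu
        have := hτspec
        rw [h0, hp0'] at this
        exact this
      · exact h
    have hedgeW : ∀ l, l + 1 ≤ Nat.find hexQ → W (p l) (p (l + 1)) = 1 := by
      intro l hl
      have hlr : l < r := by omega
      have hve := hvedge ⟨l, hlr⟩
      have e1 : p l = v (Fin.castSucc ⟨l, hlr⟩) := by
        rw [hpl l (by omega)]
        exact congrArg v (Fin.ext rfl)
      have e2 : p (l + 1) = v (Fin.succ ⟨l, hlr⟩) := by
        rw [hpl (l + 1) (by omega)]
        exact congrArg v (Fin.ext rfl)
      rw [e1, e2]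
      exact hve
    generalize hgen : Nat.find hexQ = τ at hτspec hτle hτmin hτpos hedgeW
    refine ⟨τ, p, hτpos, hτle, hp0', hτspec, hτmin, ?_, ?_⟩
    · intro l hl
      have hWe := hedgeW l (by omega)
      refine le_trans ?_ (hedge (p l) (p (l + 1)) hWe)
      rw [hbb]
      exact (div_le_div_iff_of_pos_right (mul_pos hk'pos hFpos)).mpr
        (pow_le_pow_left₀ hfminpos.le (hfge _) 2)
    · have hWe := hedgeW (τ - 1) (by omega)
      rw [show τ - 1 + 1 = τ by omega] at hWe
      have h := hedge _ _ hWe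
      have hfτ : f (p τ) = fmax := hτspec
      rw [haa, ← hfτ]
      exact h
  have hmaster := master P {j | f j = fmax} hPnonneg hProw r hr1 aa bb B
    haapos hbbpos hBr hB2 hpath
  exact expected_le P _ i B (fun t => survival_nonneg P _ hPnonneg t i)
    (fun T => hmaster T i)
end
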